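/- arXiv:1604.00611 — 4 statements merged into one kernel-verified Lean document; each statement's English description precedes it below -/
import Mathlib

section
/- Let G be an amenable group and {F'_{θ'} : θ' ∈ Θ'} any Følner net in G. Then there is a Følner subnet {F_θ : θ ∈ Θ} of {F'_{θ'}} which is L∞-admissible for G; that is, for every Borel G-space (X,𝒳) there exists a map A : L∞(X,𝒳) → ℝ^X, φ ↦ φ*, which is linear and continuous from the sup norm ‖·‖_∞ to the product (pointwise-convergence) topology on ℝ^X, such that for every φ ∈ L∞(X,𝒳): φ* = (T_g φ)* for every g ∈ G, and lim_θ A(F_θ, φ)(x) = φ*(x) for every x ∈ X (Moore–Smith limit along Θ). If in addition G is abelian, then φ*(T_g x) = φ*(x) for every g ∈ G and every x ∈ X. -/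
open Filter Topology ENNReal
open scoped symmDiff Pointwise

/-- A (left) Følner net in a locally compact group `G` with left Haar measure `μG`:
a net of compact sets of positive Haar measure which is asymptotically invariant
under every left translation (in the sense of Moore–Smith limits). -/
def IsFolnerNet {G : Type} [Group G] [TopologicalSpace G] [MeasurableSpace G]
    (μG : MeasureTheory.Measure G) {Θ : Type} [Preorder Θ] (F : Θ → Set G) : Prop :=
  (∀ θ, IsCompact (F θ)) ∧ (∀ θ, 0 < μG (F θ)) ∧
    ∀ g : G, Tendsto (fun θ => (μG ((g • F θ) ∆ (F θ))).toReal / (μG (F θ)).toReal)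
      atTop (𝓝 0)

/-- A bundled Følner net (a directed nonempty index set together with the net). -/
structure FolnerNet {G : Type} [Group G] [TopologicalSpace G] [MeasurableSpace G]
    (μG : MeasureTheory.Measure G) where
  ι : Type
  [pre : Preorder ι]
  [ne : Nonempty ι]
  [dir : IsDirected ι (· ≤ ·)]
  F : ι → Set G
  isFolner : IsFolnerNet μG F

/-- A directed (nonempty) index type, used as the index of a subnet. -/
structure DirIndex where
  ι : Type
  [pre : Preorder ι]
  [ne : Nonempty ι]
  [dir : IsDirected ι (· ≤ ·)]

attribute [instance] DirIndex.pre DirIndex.ne DirIndex.dir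
attribute [instance] FolnerNet.pre FolnerNet.ne FolnerNet.dir

/-- A Borel action of a group `G` on a measurable space `X`: a jointly measurable
map `G × X → X` satisfying the action laws. -/
structure IsBorelAction (G : Type) [Group G] [MeasurableSpace G]
    {X : Type} [MeasurableSpace X] (T : G → X → X) : Prop where
  measurable : Measurable fun p : G × X => T p.1 p.2
  one_act : ∀ x, T 1 x = x
  mul_act : ∀ g h x, T g (T h x) = T (g * h) x

open MeasureTheory

/-- Membership in `L∞(X, 𝒳)`: bounded measurable real-valued functions. -/
def MemLinf {X : Type} [MeasurableSpace X] (φ : X → ℝ) : Prop :=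
  Measurable φ ∧ ∃ C : ℝ, ∀ x, |φ x| ≤ C

/-- The ergodic average `A(K, φ)(x) = (1/|K|) ∫_K φ(T_g x) dg`. -/
noncomputable def ergAvg {G X : Type} [MeasurableSpace G] (μG : Measure G)
    (T : G → X → X) (K : Set G) (φ : X → ℝ) (x : X) : ℝ :=
  (μG K).toReal⁻¹ * ∫ g in K, φ (T g x) ∂μG

/-- The σ-algebra `𝒳_{G,μ}` of μ-almost invariant measurable sets. -/
def invSigmaAE {G X : Type} [MeasurableSpace X] (T : G → X → X) (μ : Measure X) :
    MeasurableSpace X where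
  MeasurableSet' B := MeasurableSet B ∧ ∀ g : G, μ ((T g ⁻¹' B) ∆ B) = 0
  measurableSet_empty := ⟨MeasurableSet.empty, fun g => by simp⟩
  measurableSet_compl := fun B hB => ⟨hB.1.compl, fun g => by
    have h := hB.2 g
    rw [Set.preimage_compl, compl_symmDiff_compl]
    exact h⟩
  measurableSet_iUnion := fun f hf => ⟨MeasurableSet.iUnion fun n => (hf n).1, fun g => by
    have hsub : ((T g ⁻¹' ⋃ n, f n) ∆ (⋃ n, f n)) ⊆ ⋃ n, ((T g ⁻¹' f n) ∆ (f n)) := by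
      intro x hx
      rw [Set.mem_symmDiff] at hx
      rw [Set.preimage_iUnion] at hx
      rcases hx with ⟨hx1, hx2⟩ | ⟨hx1, hx2⟩
      · obtain ⟨n, hn⟩ := Set.mem_iUnion.1 hx1
        exact Set.mem_iUnion.2 ⟨n, Set.mem_symmDiff.2
          (Or.inl ⟨hn, fun h => hx2 (Set.mem_iUnion.2 ⟨n, h⟩)⟩)⟩
      · obtain ⟨n, hn⟩ := Set.mem_iUnion.1 hx1
        exact Set.mem_iUnion.2 ⟨n, Set.mem_symmDiff.2
          (Or.inr ⟨hn, fun h => hx2 (Set.mem_iUnion.2 ⟨n, h⟩)⟩)⟩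
    refine le_antisymm ?_ zero_le
    calc μ ((T g ⁻¹' ⋃ n, f n) ∆ (⋃ n, f n)) ≤ μ (⋃ n, ((T g ⁻¹' f n) ∆ (f n))) :=
          measure_mono hsub
      _ ≤ ∑' n, μ ((T g ⁻¹' f n) ∆ (f n)) := measure_iUnion_le _
      _ = 0 := by simp [fun n => (hf n).2 g]⟩

/-- The σ-algebra `𝒳_G` of strictly `G`-invariant measurable sets. -/
def invSigma {G X : Type} [MeasurableSpace X] (T : G → X → X) :
    MeasurableSpace X where
  MeasurableSet' B := MeasurableSet B ∧ ∀ g : G, T g ⁻¹' B = B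
  measurableSet_empty := ⟨MeasurableSet.empty, fun g => by simp⟩
  measurableSet_compl := fun B hB => ⟨hB.1.compl, fun g => by
    rw [Set.preimage_compl, hB.2 g]⟩
  measurableSet_iUnion := fun f hf => ⟨MeasurableSet.iUnion fun n => (hf n).1, fun g => by
    rw [Set.preimage_iUnion]
    exact Set.iUnion_congr fun n => (hf n).2 g⟩

section Aux

variable {G X : Type} [Group G] [MeasurableSpace G] [MeasurableSpace X] {T : G → X → X}

lemma measurable_orbit (hT : IsBorelAction G T) {φ : X → ℝ} (hφ : Measurable φ) (x : X) :
    Measurable fun g : G => φ (T g x) :=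
  hφ.comp (hT.measurable.comp (measurable_id.prodMk measurable_const))

variable (μG : Measure G)

lemma integrableOn_bdd {S : Set G} (hS : μG S < ⊤) {f : G → ℝ} (hf : Measurable f)
    {C : ℝ} (hC : ∀ g, |f g| ≤ C) : IntegrableOn f S μG := by
  have : IsFiniteMeasure (μG.restrict S) := ⟨by rwa [Measure.restrict_apply_univ]⟩
  exact ⟨hf.aestronglyMeasurable,
    HasFiniteIntegral.of_bounded (ae_of_all _ fun g => by simpa [Real.norm_eq_abs] using hC g)⟩

lemma abs_avg_le {K : Set G} (hKm : MeasurableSet K) (hKfin : μG K < ⊤) (hKpos : 0 < μG K)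
    {f : G → ℝ} (hf : Measurable f) {C : ℝ} (hC : ∀ g, |f g| ≤ C) :
    |(μG K).toReal⁻¹ * ∫ g in K, f g ∂μG| ≤ C := by
  have htR : 0 < (μG K).toReal := ENNReal.toReal_pos hKpos.ne' hKfin.ne
  have hInt : |∫ g in K, f g ∂μG| ≤ C * (μG K).toReal := by
    simpa [Real.norm_eq_abs, measureReal_def] using
      norm_setIntegral_le_of_norm_le_const (f := f) hKfin
        (fun g _ => by simpa [Real.norm_eq_abs] using hC g)
  rw [abs_mul, abs_of_nonneg (inv_nonneg.2 htR.le)]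
  calc (μG K).toReal⁻¹ * |∫ g in K, f g ∂μG|
      ≤ (μG K).toReal⁻¹ * (C * (μG K).toReal) := by
        exact mul_le_mul_of_nonneg_left hInt (inv_nonneg.2 htR.le)
    _ = C := by field_simp

variable [TopologicalSpace G] [IsTopologicalGroup G] [MeasurableMul G] [BorelSpace G]

lemma setIntegral_smul_set [μG.IsMulLeftInvariant] (g : G) (K : Set G) (f : G → ℝ) :
    ∫ s in g • K, f s ∂μG = ∫ s in K, f (g * s) ∂μG := by
  have h := (measurePreserving_mul_left μG g).setIntegral_image_emb
      (MeasurableEquiv.mulLeft g).measurableEmbedding f K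
  simpa [← Set.image_smul, smul_eq_mul] using h

lemma abs_setIntegral_diff_le {A B : Set G} (hA : MeasurableSet A) (hB : MeasurableSet B)
    (hAfin : μG A < ⊤) (hBfin : μG B < ⊤) {f : G → ℝ} (hf : Measurable f)
    {C : ℝ} (hC0 : 0 ≤ C) (hC : ∀ g, |f g| ≤ C) :
    |(∫ g in A, f g ∂μG) - ∫ g in B, f g ∂μG| ≤ C * (μG (A ∆ B)).toReal := by
  have hIA : IntegrableOn f (A \ B) μG :=
    integrableOn_bdd μG (lt_of_le_of_lt (measure_mono Set.diff_subset) hAfin) hf hC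
  have hIB : IntegrableOn f (B \ A) μG :=
    integrableOn_bdd μG (lt_of_le_of_lt (measure_mono Set.diff_subset) hBfin) hf hC
  have hIAB : IntegrableOn f (A ∩ B) μG :=
    integrableOn_bdd μG (lt_of_le_of_lt (measure_mono Set.inter_subset_left) hAfin) hf hC
  have hsplitA : ∫ g in A, f g ∂μG = (∫ g in A \ B, f g ∂μG) + ∫ g in A ∩ B, f g ∂μG := by
    rw [← setIntegral_union (Set.disjoint_sdiff_inter) (hA.inter hB) hIA hIAB,
      Set.diff_union_inter]
  have hsplitB : ∫ g in B, f g ∂μG = (∫ g in B \ A, f g ∂μG) + ∫ g in A ∩ B, f g ∂μG := by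
    rw [Set.inter_comm,
      ← setIntegral_union (Set.disjoint_sdiff_inter) (hB.inter hA) hIB
      (by rwa [Set.inter_comm] at hIAB), Set.diff_union_inter]
  have hbA : |∫ g in A \ B, f g ∂μG| ≤ C * (μG (A \ B)).toReal := by
    simpa [Real.norm_eq_abs, measureReal_def] using
      norm_setIntegral_le_of_norm_le_const (f := f)
        (lt_of_le_of_lt (measure_mono Set.diff_subset) hAfin)
        (fun g _ => by simpa [Real.norm_eq_abs] using hC g)
  have hbB : |∫ g in B \ A, f g ∂μG| ≤ C * (μG (B \ A)).toReal := by
    simpa [Real.norm_eq_abs, measureReal_def] using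
      norm_setIntegral_le_of_norm_le_const (f := f)
        (lt_of_le_of_lt (measure_mono Set.diff_subset) hBfin)
        (fun g _ => by simpa [Real.norm_eq_abs] using hC g)
  have hmeas : (μG (A ∆ B)).toReal = (μG (A \ B)).toReal + (μG (B \ A)).toReal := by
    rw [Set.symmDiff_def, measure_union (disjoint_sdiff_sdiff) (hB.diff hA),
      ENNReal.toReal_add (lt_of_le_of_lt (measure_mono Set.diff_subset) hAfin).ne
        (lt_of_le_of_lt (measure_mono Set.diff_subset) hBfin).ne]
  rw [hsplitA, hsplitB, hmeas]
  calc |((∫ g in A \ B, f g ∂μG) + ∫ g in A ∩ B, f g ∂μG) -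
        ((∫ g in B \ A, f g ∂μG) + ∫ g in A ∩ B, f g ∂μG)|
      = |(∫ g in A \ B, f g ∂μG) - ∫ g in B \ A, f g ∂μG| := by ring_nf
    _ ≤ |∫ g in A \ B, f g ∂μG| + |∫ g in B \ A, f g ∂μG| := abs_sub _ _
    _ ≤ C * (μG (A \ B)).toReal + C * (μG (B \ A)).toReal := add_le_add hbA hbB
    _ = C * ((μG (A \ B)).toReal + (μG (B \ A)).toReal) := by ring

end Aux

/-- Index of the canonical subnet associated with an ultrafilter. -/
structure UFIndex {Θ' : Type} (𝒰 : Ultrafilter Θ') where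
  pt : Θ'
  sec : Set Θ'
  mem : sec ∈ 𝒰
  pt_mem : pt ∈ sec

instance {Θ' : Type} (𝒰 : Ultrafilter Θ') : Preorder (UFIndex 𝒰) where
  le p q := q.sec ⊆ p.sec
  le_refl p := Set.Subset.refl _
  le_trans a b c hab hbc := Set.Subset.trans hbc hab

instance {Θ' : Type} (𝒰 : Ultrafilter Θ') : Nonempty (UFIndex 𝒰) :=
  ⟨⟨(Filter.nonempty_of_mem (Filter.univ_mem (f := (𝒰 : Filter Θ')))).choose,
    Set.univ, Filter.univ_mem,
    (Filter.nonempty_of_mem (Filter.univ_mem (f := (𝒰 : Filter Θ')))).choose_spec⟩⟩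

instance {Θ' : Type} (𝒰 : Ultrafilter Θ') : IsDirected (UFIndex 𝒰) (· ≤ ·) := by
  constructor
  rintro ⟨θa, U, hU, haU⟩ ⟨θb, V, hV, hbV⟩
  obtain ⟨θ, hθ⟩ := Filter.nonempty_of_mem (Filter.inter_mem hU hV)
  exact ⟨⟨θ, U ∩ V, Filter.inter_mem hU hV, hθ⟩,
    Set.inter_subset_left, Set.inter_subset_right⟩

lemma UFIndex.map_pt_atTop {Θ' : Type} (𝒰 : Ultrafilter Θ') :
    Filter.map (UFIndex.pt (𝒰 := 𝒰)) atTop = (𝒰 : Filter Θ') := by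
  ext S
  rw [Filter.mem_map, Filter.mem_atTop_sets]
  constructor
  · rintro ⟨p₀, hp₀⟩
    refine Filter.mem_of_superset p₀.mem fun θ hθ => ?_
    exact hp₀ ⟨θ, p₀.sec, p₀.mem, hθ⟩ (Set.Subset.refl _)
  · intro hS
    obtain ⟨θ₀, hθ₀⟩ := Filter.nonempty_of_mem hS
    exact ⟨⟨θ₀, S, hS, hθ₀⟩, fun q hq => hq q.pt_mem⟩

set_option maxHeartbeats 1000000 in
/-- **Existence of `L∞`-admissible Følner subnets** (Theorem 0.5 of the paper).
From any Følner net `{F'_{θ'}}` in an amenable group `G` one can select a Følner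
subnet `{F_θ}` which is `L∞`-admissible for `G`: for every Borel `G`-space `(X, 𝒳)`
there is a map `A : L∞(X,𝒳) → ℝ^X`, `φ ↦ φ*`, linear and continuous from the sup norm
to the topology of pointwise convergence, such that `φ* = (T_g φ)*` for every `g ∈ G`
and `A(F_θ, φ)(x) → φ*(x)` for every `x ∈ X` (Moore–Smith limit along the subnet).
If moreover `G` is abelian then `φ*(T_g x) = φ*(x)` for all `g` and `x`. -/
theorem linf_admissible_folner_subnet
    {G : Type} [Group G] [TopologicalSpace G] [IsTopologicalGroup G] [LocallyCompactSpace G]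
    [T2Space G] [MeasurableSpace G] [BorelSpace G]
    (μG : Measure G) [μG.IsHaarMeasure]
    {Θ' : Type} [Preorder Θ'] [Nonempty Θ'] [IsDirected Θ' (· ≤ ·)]
    (F' : Θ' → Set G) (hF' : IsFolnerNet μG F') :
    ∃ (D : DirIndex) (h : D.ι → Θ'),
      -- {F' ∘ h} is a subnet of {F'}
      Tendsto h atTop atTop ∧ IsFolnerNet μG (F' ∘ h) ∧
      -- and it is L∞-admissible for G:
      ∀ (X : Type) [MeasurableSpace X] (T : G → X → X), IsBorelAction G T →
        ∃ A : (X → ℝ) → (X → ℝ),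
          -- A is linear on L∞(X,𝒳)
          (∀ (φ ψ : X → ℝ), MemLinf φ → MemLinf ψ → ∀ c : ℝ,
            A (fun x => c * φ x + ψ x) = fun x => c * A φ x + A ψ x) ∧
          -- A is continuous from (L∞, ‖·‖_∞) to ℝ^X with the product topology
          (∀ x : X, ∀ ε : ℝ, 0 < ε → ∃ δ : ℝ, 0 < δ ∧ ∀ (φ ψ : X → ℝ),
            MemLinf φ → MemLinf ψ → (∀ y, |φ y - ψ y| ≤ δ) → |A φ x - A ψ x| ≤ ε) ∧
          -- φ* = (T_g φ)* for every g
          (∀ φ : X → ℝ, MemLinf φ → ∀ g : G, A φ = A (fun x => φ (T g x))) ∧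
          -- the averages over the subnet converge pointwise everywhere to φ*
          (∀ φ : X → ℝ, MemLinf φ → ∀ x : X,
            Tendsto (fun θ => ergAvg μG T (F' (h θ)) φ x) atTop (𝓝 (A φ x))) ∧
          -- if G is abelian, φ* is G-invariant
          ((∀ g₁ g₂ : G, g₁ * g₂ = g₂ * g₁) →
            ∀ φ : X → ℝ, MemLinf φ → ∀ (g : G) (x : X), A φ (T g x) = A φ x) := by
  classical
  obtain ⟨hcmp, hpos, hinv⟩ := hF'
  let 𝒰 : Ultrafilter Θ' := Ultrafilter.of atTop
  have h𝒰le : (𝒰 : Filter Θ') ≤ atTop := Ultrafilter.of_le _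
  let h : UFIndex 𝒰 → Θ' := UFIndex.pt
  have hmap : Filter.map h atTop = (𝒰 : Filter Θ') := UFIndex.map_pt_atTop 𝒰
  have htend : Tendsto h atTop atTop := by rw [Tendsto, hmap]; exact h𝒰le
  refine ⟨⟨UFIndex 𝒰⟩, h, htend, ⟨fun θ => hcmp _, fun θ => hpos _, fun g => (hinv g).comp htend⟩, ?_⟩
  intro X _ T hT
  let u : (X → ℝ) → X → Θ' → ℝ := fun φ x θ' => ergAvg μG T (F' θ') φ x
  have hKm : ∀ θ', MeasurableSet (F' θ') := fun θ' => (hcmp θ').isClosed.measurableSet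
  have hKfin : ∀ θ', μG (F' θ') < ⊤ := fun θ' => (hcmp θ').measure_lt_top
  have horb : ∀ (φ : X → ℝ), Measurable φ → ∀ x, Measurable fun g : G => φ (T g x) :=
    fun φ hφ x => measurable_orbit hT hφ x
  have hIOn : ∀ (φ : X → ℝ), MemLinf φ → ∀ (x : X) (θ' : Θ'),
      IntegrableOn (fun g => φ (T g x)) (F' θ') μG := by
    rintro φ ⟨hm, C, hC⟩ x θ'
    exact integrableOn_bdd μG (hKfin θ') (horb φ hm x) (fun g => hC (T g x))
  have hex : ∀ (φ : X → ℝ), MemLinf φ → ∀ x, ∃ L, Tendsto (u φ x) ↑𝒰 (𝓝 L) := by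
    rintro φ ⟨hm, C, hC⟩ x
    have hb : ∀ θ', u φ x θ' ∈ Set.Icc (-C) C := fun θ' =>
      Set.mem_Icc.2 (abs_le.1
        (abs_avg_le μG (hKm θ') (hKfin θ') (hpos θ') (horb φ hm x) (fun g => hC (T g x))))
    have hmem : Set.Icc (-C) C ∈ Filter.map (u φ x) ↑𝒰 :=
      Filter.mem_map.2 (Filter.univ_mem' hb)
    obtain ⟨L, _, hL⟩ := isCompact_Icc.ultrafilter_le_nhds (𝒰.map (u φ x))
      (by rwa [le_principal_iff, Ultrafilter.coe_map])
    exact ⟨L, by rwa [Tendsto, ← Ultrafilter.coe_map]⟩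
  let A : (X → ℝ) → X → ℝ := fun φ x => limUnder ↑𝒰 (u φ x)
  have hA : ∀ φ, MemLinf φ → ∀ x, Tendsto (u φ x) ↑𝒰 (𝓝 (A φ x)) :=
    fun φ hφ x => tendsto_nhds_limUnder (hex φ hφ x)
  -- G-invariance of A (the Følner computation)
  have hTgLinf : ∀ (φ : X → ℝ), MemLinf φ → ∀ g : G, MemLinf (fun y => φ (T g y)) := by
    rintro φ ⟨hm, C, hC⟩ g
    exact ⟨hm.comp (hT.measurable.comp (measurable_const.prodMk measurable_id)),
      C, fun y => hC _⟩
  have hinvA : ∀ (φ : X → ℝ), MemLinf φ → ∀ g : G, A φ = A (fun x => φ (T g x)) := by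
    intro φ hφ g
    funext x
    obtain ⟨hm, C, hC⟩ := hφ
    have hC'0 : (0:ℝ) ≤ max C 0 := le_max_right _ _
    have hC'b : ∀ y, |φ y| ≤ max C 0 := fun y => (hC y).trans (le_max_left _ _)
    have hcompθ : ∀ θ', u (fun y => φ (T g y)) x θ' =
        (μG (F' θ')).toReal⁻¹ * ∫ s in g • F' θ', φ (T s x) ∂μG := by
      intro θ'
      show (μG (F' θ')).toReal⁻¹ * ∫ s in F' θ', φ (T g (T s x)) ∂μG = _
      have hfe : (fun s => φ (T g (T s x))) = fun s => φ (T (g * s) x) :=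
        funext fun s => by rw [hT.mul_act]
      rw [hfe, setIntegral_smul_set μG g]
    have hdiff : ∀ θ', |u (fun y => φ (T g y)) x θ' - u φ x θ'| ≤
        max C 0 * ((μG ((g • F' θ') ∆ (F' θ'))).toReal / (μG (F' θ')).toReal) := by
      intro θ'
      rw [hcompθ θ']
      have hsm : MeasurableSet (g • F' θ') := ((hcmp θ').smul g).isClosed.measurableSet
      have hsfin : μG (g • F' θ') < ⊤ := ((hcmp θ').smul g).measure_lt_top
      have hI := abs_setIntegral_diff_le μG hsm (hKm θ') hsfin (hKfin θ')
        (horb φ hm x) hC'0 (fun s => hC'b (T s x))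
      have htR : 0 < (μG (F' θ')).toReal := ENNReal.toReal_pos (hpos θ').ne' (hKfin θ').ne
      show |(μG (F' θ')).toReal⁻¹ * ∫ s in g • F' θ', φ (T s x) ∂μG -
            (μG (F' θ')).toReal⁻¹ * ∫ s in F' θ', φ (T s x) ∂μG| ≤ _
      rw [← mul_sub, abs_mul, abs_of_nonneg (inv_nonneg.2 htR.le)]
      calc (μG (F' θ')).toReal⁻¹ *
            |(∫ s in g • F' θ', φ (T s x) ∂μG) - ∫ s in F' θ', φ (T s x) ∂μG|
          ≤ (μG (F' θ')).toReal⁻¹ * (max C 0 * (μG ((g • F' θ') ∆ (F' θ'))).toReal) :=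
            mul_le_mul_of_nonneg_left hI (inv_nonneg.2 htR.le)
        _ = max C 0 * ((μG ((g • F' θ') ∆ (F' θ'))).toReal / (μG (F' θ')).toReal) := by
            rw [div_eq_mul_inv]; ring
    have h0 : Tendsto (fun θ' => max C 0 *
        ((μG ((g • F' θ') ∆ (F' θ'))).toReal / (μG (F' θ')).toReal)) ↑𝒰 (𝓝 0) := by
      have h1 := (hinv g).const_mul (max C 0)
      rw [mul_zero] at h1
      exact h1.mono_left h𝒰le
    have hzero : Tendsto (fun θ' => u (fun y => φ (T g y)) x θ' - u φ x θ') ↑𝒰 (𝓝 0) :=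
      squeeze_zero_norm (fun θ' => by
        simpa [Real.norm_eq_abs] using hdiff θ') h0
    have ht2 : Tendsto (u (fun y => φ (T g y)) x) ↑𝒰 (𝓝 (A φ x)) := by
      have h2 := hzero.add (hA φ ⟨hm, C, hC⟩ x)
      rw [zero_add] at h2
      exact h2.congr fun θ' => by ring
    exact tendsto_nhds_unique ht2 (hA _ (hTgLinf φ ⟨hm, C, hC⟩ g) x)
  refine ⟨A, ?_, ?_, hinvA, ?_, ?_⟩
  · -- linearity
    intro φ ψ hφ hψ c
    funext x
    obtain ⟨hφm, Cφ, hCφ⟩ := hφ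
    obtain ⟨hψm, Cψ, hCψ⟩ := hψ
    have hcomb : MemLinf (fun y => c * φ y + ψ y) :=
      ⟨(hφm.const_mul c).add hψm, |c| * Cφ + Cψ, fun y => by
        calc |c * φ y + ψ y| ≤ |c * φ y| + |ψ y| := abs_add_le _ _
          _ = |c| * |φ y| + |ψ y| := by rw [abs_mul]
          _ ≤ |c| * Cφ + Cψ :=
            add_le_add (mul_le_mul_of_nonneg_left (hCφ y) (abs_nonneg c)) (hCψ y)⟩
    have h1 : ∀ θ', u (fun y => c * φ y + ψ y) x θ' = c * u φ x θ' + u ψ x θ' := by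
      intro θ'
      show (μG (F' θ')).toReal⁻¹ * ∫ g in F' θ', (c * φ (T g x) + ψ (T g x)) ∂μG = _
      rw [integral_add ((hIOn φ ⟨hφm, Cφ, hCφ⟩ x θ').const_mul c) (hIOn ψ ⟨hψm, Cψ, hCψ⟩ x θ'),
        integral_const_mul]
      show _ = c * ((μG (F' θ')).toReal⁻¹ * ∫ g in F' θ', φ (T g x) ∂μG) +
        (μG (F' θ')).toReal⁻¹ * ∫ g in F' θ', ψ (T g x) ∂μG
      ring
    have ht1 : Tendsto (u (fun y => c * φ y + ψ y) x) ↑𝒰 (𝓝 (c * A φ x + A ψ x)) := by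
      have h2 := ((hA φ ⟨hφm, Cφ, hCφ⟩ x).const_mul c).add (hA ψ ⟨hψm, Cψ, hCψ⟩ x)
      exact h2.congr fun θ' => (h1 θ').symm
    exact tendsto_nhds_unique (hA _ hcomb x) ht1
  · -- continuity
    intro x ε hε
    refine ⟨ε, hε, fun φ ψ hφ hψ hd => ?_⟩
    have hb : ∀ θ', |u φ x θ' - u ψ x θ'| ≤ ε := by
      intro θ'
      have heq : u φ x θ' - u ψ x θ' =
          (μG (F' θ')).toReal⁻¹ * ∫ g in F' θ', (φ (T g x) - ψ (T g x)) ∂μG := by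
        show (μG (F' θ')).toReal⁻¹ * ∫ g in F' θ', φ (T g x) ∂μG -
          (μG (F' θ')).toReal⁻¹ * ∫ g in F' θ', ψ (T g x) ∂μG = _
        rw [integral_sub (hIOn φ hφ x θ') (hIOn ψ hψ x θ')]; ring
      rw [heq]
      exact abs_avg_le μG (hKm θ') (hKfin θ') (hpos θ')
        ((horb φ hφ.1 x).sub (horb ψ hψ.1 x)) (fun g => hd (T g x))
    have ht : Tendsto (fun θ' => |u φ x θ' - u ψ x θ'|) ↑𝒰 (𝓝 |A φ x - A ψ x|) :=
      ((hA φ hφ x).sub (hA ψ hψ x)).abs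
    exact le_of_tendsto' ht hb
  · -- convergence along the subnet
    intro φ hφ x
    have h1 : Tendsto (u φ x) (Filter.map h atTop) (𝓝 (A φ x)) := by
      rw [hmap]; exact hA φ hφ x
    exact h1.comp Filter.tendsto_map
  · -- abelian case
    intro hcomm φ hφ g x
    have hnet : u φ (T g x) = u (fun y => φ (T g y)) x := by
      funext θ'
      show (μG (F' θ')).toReal⁻¹ * ∫ s in F' θ', φ (T s (T g x)) ∂μG =
        (μG (F' θ')).toReal⁻¹ * ∫ s in F' θ', φ (T g (T s x)) ∂μG
      have hfe : (fun s => φ (T s (T g x))) = fun s => φ (T g (T s x)) :=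
        funext fun s => by rw [hT.mul_act, hT.mul_act, hcomm]
      rw [hfe]
    calc A φ (T g x) = A (fun y => φ (T g y)) x := by
          show limUnder ↑𝒰 (u φ (T g x)) = limUnder ↑𝒰 (u (fun y => φ (T g y)) x)
          rw [hnet]
      _ = A φ x := (congrFun (hinvA φ hφ g) x).symm
end

section
/- Let G be a σ-compact amenable group and let G↷_T X be a Borel action of G by continuous transformations of a compact metric space X preserving a Borel probability measure μ (not necessarily ergodic). Let φ ∈ L²(X,ℬ_X,μ) with φ ≥ 0 μ-a.e. and ∫_X φ dμ > 0. Then for every ε > 0 the set 𝓗(φ,ε) = {g ∈ G : ∫_X φ(x) φ(T_g x) dμ(x) > (∫_X φ dμ)² − ε} has positive lower Banach density: for every Følner sequence {F_n : n ∈ ℕ} in G, liminf_{n→∞} |𝓗(φ,ε) ∩ F_n| / |F_n| > 0. Consequently 𝓗(φ,ε) is syndetic in G, i.e. there is a compact set K ⊆ G with G = K·𝓗(φ,ε). -/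
open Filter Topology ENNReal
open scoped symmDiff Pointwise

open MeasureTheory

namespace KhinAux

variable {G : Type} [Group G] [MeasurableSpace G]
variable {X : Type} [MeasurableSpace X]
variable {T : G → X → X} {μ : Measure X} [IsProbabilityMeasure μ]

theorem measurable_T (hT : IsBorelAction G T) (g : G) : Measurable (T g) :=
  hT.measurable.comp (measurable_const.prodMk measurable_id)

theorem mpT (hT : IsBorelAction G T) (hinv : ∀ g : G, Measure.map (T g) μ = μ) (g : G) :
    MeasurePreserving (T g) μ μ :=
  ⟨measurable_T hT g, hinv g⟩

noncomputable def Uop (hT : IsBorelAction G T) (hinv : ∀ g : G, Measure.map (T g) μ = μ)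
    (g : G) : Lp ℝ 2 μ →ₗᵢ[ℝ] Lp ℝ 2 μ :=
  Lp.compMeasurePreservingₗᵢ ℝ (T g) (mpT hT hinv g)

theorem Uop_ae (hT : IsBorelAction G T) (hinv : ∀ g : G, Measure.map (T g) μ = μ)
    (g : G) (v : Lp ℝ 2 μ) : Uop hT hinv g v =ᵐ[μ] fun x => v (T g x) :=
  Lp.coeFn_compMeasurePreserving v (mpT hT hinv g)

theorem ae_comp (hT : IsBorelAction G T) (hinv : ∀ g : G, Measure.map (T g) μ = μ)
    (g : G) {u u' : X → ℝ} (h : u =ᵐ[μ] u') :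
    (fun x => u (T g x)) =ᵐ[μ] fun x => u' (T g x) :=
  (mpT hT hinv g).quasiMeasurePreserving.ae_eq_comp h

theorem Uop_comp (hT : IsBorelAction G T) (hinv : ∀ g : G, Measure.map (T g) μ = μ)
    (g h : G) (v : Lp ℝ 2 μ) :
    Uop hT hinv g (Uop hT hinv h v) = Uop hT hinv (h * g) v := by
  ext1
  filter_upwards [Uop_ae hT hinv g (Uop hT hinv h v), Uop_ae hT hinv (h * g) v,
    ae_comp hT hinv g (Uop_ae hT hinv h v)] with x h1 h2 h3
  rw [h1, h3, hT.mul_act, h2]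

end KhinAux

namespace KhinAux2
open KhinAux
set_option linter.unusedSectionVars false

variable {G : Type} [Group G] [MeasurableSpace G]
variable {X : Type} [MeasurableSpace X]
variable {T : G → X → X} {μ : Measure X} [IsProbabilityMeasure μ]
variable (hT : IsBorelAction G T) (hinv : ∀ g : G, Measure.map (T g) μ = μ)
variable (φL : Lp ℝ 2 μ)

noncomputable def psi (v : Lp ℝ 2 μ) (g : G) : ℝ :=
  inner (𝕜 := ℝ) φL (Uop hT hinv g v)

theorem psi_eq (v : Lp ℝ 2 μ) (g : G) :
    psi hT hinv φL v g = ∫ x, φL x * v (T g x) ∂μ := by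
  rw [psi, L2.inner_def]
  refine integral_congr_ae ?_
  filter_upwards [Uop_ae hT hinv g v] with x hx
  simp [hx, RCLike.inner_apply, conj_trivial, mul_comm]

include hT hinv in
theorem psi_integrand_integrable (v : Lp ℝ 2 μ) (g : G) :
    Integrable (fun x => φL x * v (T g x)) μ := by
  have h := L2.integrable_inner (𝕜 := ℝ) φL (Uop hT hinv g v)
  refine h.congr ?_
  filter_upwards [Uop_ae hT hinv g v] with x hx
  simp [hx, RCLike.inner_apply, conj_trivial, mul_comm]

theorem psi_bound (v : Lp ℝ 2 μ) (g : G) : |psi hT hinv φL v g| ≤ ‖φL‖ * ‖v‖ := by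
  have h := abs_real_inner_le_norm φL (Uop hT hinv g v)
  rwa [(Uop hT hinv g).norm_map] at h

theorem psi_sub (v v' : Lp ℝ 2 μ) (g : G) :
    psi hT hinv φL (v - v') g = psi hT hinv φL v g - psi hT hinv φL v' g := by
  simp [psi, map_sub, inner_sub_right]

theorem psi_shift (v : Lp ℝ 2 μ) (g h : G) :
    psi hT hinv φL (Uop hT hinv h v) g = psi hT hinv φL v (h * g) := by
  rw [psi, Uop_comp, psi]

theorem psi_stronglyMeasurable (v : Lp ℝ 2 μ) :
    StronglyMeasurable (psi hT hinv φL v) := by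
  have h : StronglyMeasurable fun p : G × X => φL p.2 * v (T p.1 p.2) := by
    refine Measurable.stronglyMeasurable ?_
    exact ((Lp.stronglyMeasurable φL).measurable.comp measurable_snd).mul
      ((Lp.stronglyMeasurable v).measurable.comp hT.measurable)
  have := h.integral_prod_right' (ν := μ)
  have heq : (psi hT hinv φL v) = fun g => ∫ y, φL y * v (T g y) ∂μ := by
    funext g; rw [psi_eq]
  rw [heq]
  exact this

end KhinAux2

namespace KhinAux3
open KhinAux KhinAux2
set_option linter.unusedSectionVars false

variable {G : Type} [Group G] [MeasurableSpace G]
variable {X : Type} [MeasurableSpace X]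
variable {T : G → X → X} {μ : Measure X} [IsProbabilityMeasure μ]
variable (hT : IsBorelAction G T) (hinv : ∀ g : G, Measure.map (T g) μ = μ)

noncomputable def Kc : Submodule ℝ (Lp ℝ 2 μ) :=
  (Submodule.span ℝ {u : Lp ℝ 2 μ | ∃ h v, u = Uop hT hinv h v - v}).topologicalClosure

instance : (Kc hT hinv).HasOrthogonalProjection := by
  haveI : CompleteSpace (Kc hT hinv) :=
    (Submodule.isClosed_topologicalClosure _).completeSpace_coe
  infer_instance

theorem gen_mem_Kc (h : G) (v : Lp ℝ 2 μ) : Uop hT hinv h v - v ∈ Kc hT hinv :=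
  Submodule.le_topologicalClosure _ (Submodule.subset_span ⟨h, v, rfl⟩)

theorem Uop_fixed_of_orth {w : Lp ℝ 2 μ} (hw : w ∈ (Kc hT hinv)ᗮ) (h : G) :
    Uop hT hinv h w = w := by
  have h0 : inner (𝕜 := ℝ) (Uop hT hinv h w - w) w = 0 :=
    (Submodule.mem_orthogonal _ _).1 hw _ (gen_mem_Kc hT hinv h w)
  rw [inner_sub_left] at h0
  have hn : ‖Uop hT hinv h w - w‖ ^ 2 = 0 := by
    rw [norm_sub_sq_real, (Uop hT hinv h).norm_map]
    have : inner (𝕜 := ℝ) (Uop hT hinv h w) w = inner (𝕜 := ℝ) w w := by linarith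
    rw [this, real_inner_self_eq_norm_sq]; ring
  have := pow_eq_zero_iff (n := 2) (by norm_num) |>.1 hn
  rw [norm_eq_zero] at this
  exact sub_eq_zero.1 this

noncomputable def onef : Lp ℝ 2 μ := (memLp_const (1 : ℝ)).toLp (fun _ => (1 : ℝ))

theorem onef_ae : (onef (μ := μ)) =ᵐ[μ] fun _ => (1 : ℝ) := by
  unfold onef; exact MemLp.coeFn_toLp _

theorem inner_onef (u : Lp ℝ 2 μ) :
    inner (𝕜 := ℝ) (onef (μ := μ)) u = ∫ x, u x ∂μ := by
  rw [L2.inner_def]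
  refine integral_congr_ae ?_
  filter_upwards [onef_ae (μ := μ)] with x hx
  simp [hx, RCLike.inner_apply, conj_trivial]

theorem integral_Uop (h : G) (v : Lp ℝ 2 μ) :
    ∫ x, (Uop hT hinv h v) x ∂μ = ∫ x, v x ∂μ := by
  rw [integral_congr_ae (Uop_ae hT hinv h v)]
  calc ∫ x, v (T h x) ∂μ = ∫ y, v y ∂(Measure.map (T h) μ) := by
        rw [integral_map (measurable_T hT h).aemeasurable]
        rw [hinv h]; exact (Lp.stronglyMeasurable v).aestronglyMeasurable
    _ = ∫ x, v x ∂μ := by rw [hinv h]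

theorem onef_orth_Kc : ∀ u ∈ Kc hT hinv, inner (𝕜 := ℝ) (onef (μ := μ)) u = 0 := by
  have hspan : Submodule.span ℝ {u : Lp ℝ 2 μ | ∃ h v, u = Uop hT hinv h v - v} ≤
      LinearMap.ker (innerSL ℝ (onef (μ := μ)) : Lp ℝ 2 μ →ₗ[ℝ] ℝ) := by
    rw [Submodule.span_le]
    rintro u ⟨h, v, rfl⟩
    simp only [SetLike.mem_coe, LinearMap.mem_ker, ContinuousLinearMap.coe_coe, innerSL_apply_apply]
    rw [inner_sub_right, inner_onef, inner_onef, integral_Uop hT hinv, sub_self]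
  have hker : Kc hT hinv ≤ LinearMap.ker (innerSL ℝ (onef (μ := μ)) : Lp ℝ 2 μ →ₗ[ℝ] ℝ) :=
    Submodule.topologicalClosure_minimal _ hspan (ContinuousLinearMap.isClosed_ker _)
  intro u hu
  have := hker hu
  simpa using this

variable (φL : Lp ℝ 2 μ)

noncomputable def wf : Lp ℝ 2 μ :=
  φL - ((Kc hT hinv).orthogonalProjectionOnto φL : Lp ℝ 2 μ)

theorem wf_orth : wf hT hinv φL ∈ (Kc hT hinv)ᗮ :=
  (Kc hT hinv).sub_starProjection_mem_orthogonal φL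

theorem inner_phi_wf :
    inner (𝕜 := ℝ) φL (wf hT hinv φL) = ‖wf hT hinv φL‖ ^ 2 := by
  have h0 : inner (𝕜 := ℝ) (φL - wf hT hinv φL) (wf hT hinv φL) = 0 := by
    have hd : φL - wf hT hinv φL = ((Kc hT hinv).orthogonalProjectionOnto φL : Lp ℝ 2 μ) := by
      rw [wf]; abel
    rw [hd]
    exact (Submodule.mem_orthogonal _ _).1 (wf_orth hT hinv φL) _ (SetLike.coe_mem _)
  rw [inner_sub_left] at h0
  have hs := real_inner_self_eq_norm_sq (wf hT hinv φL)
  linarith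

theorem psi_wf_const (g : G) :
    psi hT hinv φL (wf hT hinv φL) g = ‖wf hT hinv φL‖ ^ 2 := by
  rw [psi, Uop_fixed_of_orth hT hinv (wf_orth hT hinv φL) g, inner_phi_wf]

theorem psi_phi_decomp (g : G) :
    psi hT hinv φL φL g =
      psi hT hinv φL (((Kc hT hinv).orthogonalProjectionOnto φL : Lp ℝ 2 μ)) g
        + ‖wf hT hinv φL‖ ^ 2 := by
  have h := psi_sub hT hinv φL φL (((Kc hT hinv).orthogonalProjectionOnto φL : Lp ℝ 2 μ)) g
  have hdec : φL - ((Kc hT hinv).orthogonalProjectionOnto φL : Lp ℝ 2 μ) = wf hT hinv φL := rfl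
  rw [hdec, psi_wf_const] at h
  linarith

theorem mean_sq_le_norm_wf_sq :
    (∫ x, φL x ∂μ) ^ 2 ≤ ‖wf hT hinv φL‖ ^ 2 := by
  have h1 : inner (𝕜 := ℝ) (onef (μ := μ)) (wf hT hinv φL) = ∫ x, φL x ∂μ := by
    rw [wf, inner_sub_right, inner_onef,
      onef_orth_Kc hT hinv _ (SetLike.coe_mem _), sub_zero]
  have h2 : inner (𝕜 := ℝ) (onef (μ := μ)) (onef (μ := μ)) = 1 := by
    rw [inner_onef]
    rw [integral_congr_ae (onef_ae (μ := μ))]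
    simp
  have hcs := real_inner_mul_inner_self_le (onef (μ := μ)) (wf hT hinv φL)
  rw [h1, h2, one_mul, real_inner_self_eq_norm_sq] at hcs
  nlinarith [hcs]

theorem norm_wf_sq_le : ‖wf hT hinv φL‖ ^ 2 ≤ ‖φL‖ ^ 2 := by
  have h0 : inner (𝕜 := ℝ) (((Kc hT hinv).orthogonalProjectionOnto φL : Lp ℝ 2 μ))
      (wf hT hinv φL) = 0 :=
    (Submodule.mem_orthogonal _ _).1 (wf_orth hT hinv φL) _ (SetLike.coe_mem _)
  have hh := norm_add_sq_real (((Kc hT hinv).orthogonalProjectionOnto φL : Lp ℝ 2 μ))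
    (wf hT hinv φL)
  have hdec : ((Kc hT hinv).orthogonalProjectionOnto φL : Lp ℝ 2 μ) + wf hT hinv φL = φL := by
    rw [wf]; abel
  rw [h0, hdec] at hh
  nlinarith [norm_nonneg (((Kc hT hinv).orthogonalProjectionOnto φL : Lp ℝ 2 μ))]

end KhinAux3

namespace KhinAux4
open KhinAux KhinAux2 KhinAux3
set_option linter.unusedSectionVars false

variable {G : Type} [Group G] [TopologicalSpace G] [IsTopologicalGroup G]
  [T2Space G] [MeasurableSpace G] [BorelSpace G]
  {X : Type} [MeasurableSpace X]
  {T : G → X → X} {μ : Measure X} [IsProbabilityMeasure μ]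
  (μG : Measure G) [μG.IsMulLeftInvariant] [IsFiniteMeasureOnCompacts μG]
  (hT : IsBorelAction G T) (hinv : ∀ g : G, Measure.map (T g) μ = μ)
  (φL : Lp ℝ 2 μ)

theorem integrableOn_of_bdd {f : G → ℝ} (hm : StronglyMeasurable f) {C : ℝ}
    (hb : ∀ g, |f g| ≤ C) {A : Set G} (hA : μG A ≠ ⊤) : IntegrableOn f A μG := by
  haveI : IsFiniteMeasure (μG.restrict A) :=
    ⟨by rw [Measure.restrict_apply_univ]; exact lt_top_iff_ne_top.2 hA⟩
  exact ⟨hm.aestronglyMeasurable,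
    HasFiniteIntegral.of_bounded (C := C) (ae_of_all _ fun g => by simpa using hb g)⟩

theorem abs_setIntegral_diff_le {f : G → ℝ} (hm : StronglyMeasurable f) {C : ℝ}
    (hb : ∀ g, |f g| ≤ C) {A B : Set G} (hAm : MeasurableSet A) (hBm : MeasurableSet B)
    (hA : μG A ≠ ⊤) (hB : μG B ≠ ⊤) :
    |(∫ g in A, f g ∂μG) - ∫ g in B, f g ∂μG| ≤ C * (μG (A ∆ B)).toReal := by
  have hC : 0 ≤ C := le_trans (abs_nonneg _) (hb 1)
  have hsplitA : (∫ g in A ∩ B, f g ∂μG) + ∫ g in A \ B, f g ∂μG = ∫ g in A, f g ∂μG :=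
    integral_inter_add_diff hBm (integrableOn_of_bdd μG hm hb hA)
  have hsplitB : (∫ g in B ∩ A, f g ∂μG) + ∫ g in B \ A, f g ∂μG = ∫ g in B, f g ∂μG :=
    integral_inter_add_diff hAm (integrableOn_of_bdd μG hm hb hB)
  rw [Set.inter_comm B A] at hsplitB
  have h1 : |∫ g in A \ B, f g ∂μG| ≤ C * (μG (A \ B)).toReal := by
    have := norm_setIntegral_le_of_norm_le_const (μ := μG) (s := A \ B) (f := f) (C := C)
      (lt_of_le_of_lt (measure_mono Set.diff_subset) (lt_top_iff_ne_top.2 hA))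
      (fun x _ => by simpa using hb x)
    simpa [Real.norm_eq_abs, Measure.real] using this
  have h2 : |∫ g in B \ A, f g ∂μG| ≤ C * (μG (B \ A)).toReal := by
    have := norm_setIntegral_le_of_norm_le_const (μ := μG) (s := B \ A) (f := f) (C := C)
      (lt_of_le_of_lt (measure_mono Set.diff_subset) (lt_top_iff_ne_top.2 hB))
      (fun x _ => by simpa using hb x)
    simpa [Real.norm_eq_abs, Measure.real] using this
  have hμ : (μG (A ∆ B)).toReal = (μG (A \ B)).toReal + (μG (B \ A)).toReal := by
    have hdisj : Disjoint (A \ B) (B \ A) := disjoint_sdiff_sdiff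
    have : μG (A ∆ B) = μG (A \ B) + μG (B \ A) := by
      rw [Set.symmDiff_def, measure_union hdisj (hBm.diff hAm)]
    rw [this, ENNReal.toReal_add
      (ne_top_of_le_ne_top hA (measure_mono Set.diff_subset))
      (ne_top_of_le_ne_top hB (measure_mono Set.diff_subset))]
  have : (∫ g in A, f g ∂μG) - ∫ g in B, f g ∂μG
      = (∫ g in A \ B, f g ∂μG) - ∫ g in B \ A, f g ∂μG := by
    rw [← hsplitA, ← hsplitB]; ring
  rw [this, hμ]
  calc |(∫ g in A \ B, f g ∂μG) - ∫ g in B \ A, f g ∂μG|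
      ≤ |∫ g in A \ B, f g ∂μG| + |∫ g in B \ A, f g ∂μG| := abs_sub _ _
    _ ≤ C * (μG (A \ B)).toReal + C * (μG (B \ A)).toReal := add_le_add h1 h2
    _ = C * ((μG (A \ B)).toReal + (μG (B \ A)).toReal) := by ring

theorem psi_integrableOn (v : Lp ℝ 2 μ) {A : Set G} (hA : μG A ≠ ⊤) :
    IntegrableOn (psi hT hinv φL v) A μG :=
  integrableOn_of_bdd μG (psi_stronglyMeasurable hT hinv φL v) (psi_bound hT hinv φL v) hA

variable {Θ : Type} [Preorder Θ]

theorem tendsto_avg_zero (F : Θ → Set G) (hF : IsFolnerNet μG F)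
    {c : Lp ℝ 2 μ} (hc : c ∈ Kc hT hinv) :
    Tendsto (fun θ => (μG (F θ)).toReal⁻¹ * ∫ g in F θ, psi hT hinv φL c g ∂μG)
      atTop (𝓝 0) := by
  classical
  have hFm : ∀ θ, MeasurableSet (F θ) := fun θ => (hF.1 θ).isClosed.measurableSet
  have hFfin : ∀ θ, μG (F θ) ≠ ⊤ := fun θ => (hF.1 θ).measure_lt_top.ne
  have hFpos : ∀ θ, 0 < (μG (F θ)).toReal := fun θ =>
    ENNReal.toReal_pos (hF.2.1 θ).ne' (hFfin θ)
  set R : Lp ℝ 2 μ → Θ → ℝ :=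
    fun c θ => (μG (F θ)).toReal⁻¹ * ∫ g in F θ, psi hT hinv φL c g ∂μG with hRdef
  show Tendsto (R c) atTop (𝓝 0)
  have hRsub : ∀ c c' θ, R (c - c') θ = R c θ - R c' θ := by
    intro c c' θ
    have h1 : (∫ g in F θ, psi hT hinv φL (c - c') g ∂μG)
        = (∫ g in F θ, psi hT hinv φL c g ∂μG) - ∫ g in F θ, psi hT hinv φL c' g ∂μG := by
      rw [← integral_sub (psi_integrableOn μG hT hinv φL c (hFfin θ))
        (psi_integrableOn μG hT hinv φL c' (hFfin θ))]
      exact integral_congr_ae (ae_of_all _ fun g => psi_sub hT hinv φL c c' g)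
    simp only [hRdef, h1]; ring
  have hRbound : ∀ c θ, |R c θ| ≤ ‖φL‖ * ‖c‖ := by
    intro c θ
    have h1 : |∫ g in F θ, psi hT hinv φL c g ∂μG| ≤ (‖φL‖ * ‖c‖) * (μG (F θ)).toReal := by
      have := norm_setIntegral_le_of_norm_le_const (μ := μG) (s := F θ)
        (f := psi hT hinv φL c) (C := ‖φL‖ * ‖c‖) ((hF.1 θ).measure_lt_top)
        (fun x _ => by simpa using psi_bound hT hinv φL c x)
      simpa [Real.norm_eq_abs, Measure.real] using this
    have h2 : |R c θ| = (μG (F θ)).toReal⁻¹ * |∫ g in F θ, psi hT hinv φL c g ∂μG| := by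
      rw [hRdef]; simp [abs_mul, abs_of_nonneg (inv_nonneg.2 (hFpos θ).le)]
    rw [h2]
    calc (μG (F θ)).toReal⁻¹ * |∫ g in F θ, psi hT hinv φL c g ∂μG|
        ≤ (μG (F θ)).toReal⁻¹ * ((‖φL‖ * ‖c‖) * (μG (F θ)).toReal) := by
          exact mul_le_mul_of_nonneg_left h1 (inv_nonneg.2 (hFpos θ).le)
      _ = ‖φL‖ * ‖c‖ := by
          rw [mul_comm ((μG (F θ)).toReal⁻¹), mul_assoc, mul_comm ((μG (F θ)).toReal),
            inv_mul_cancel₀ (hFpos θ).ne', mul_one]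
  -- generators
  have hgen : ∀ (h : G) (v : Lp ℝ 2 μ),
      Tendsto (R (Uop hT hinv h v - v)) atTop (𝓝 0) := by
    intro h v
    have hkey : ∀ θ, |R (Uop hT hinv h v - v) θ|
        ≤ (‖φL‖ * ‖v‖) * ((μG ((h • F θ) ∆ (F θ))).toReal / (μG (F θ)).toReal) := by
      intro θ
      have hsmul_compact : IsCompact (h • F θ) := (hF.1 θ).smul h
      have hsmul_meas : MeasurableSet (h • F θ) := hsmul_compact.isClosed.measurableSet
      have hsmul_fin : μG (h • F θ) ≠ ⊤ := hsmul_compact.measure_lt_top.ne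
      have him : (h • F θ) = (fun g => h * g) '' F θ := by
        ext x
        constructor
        · rintro ⟨y, hy, rfl⟩; exact ⟨y, hy, rfl⟩
        · rintro ⟨y, hy, rfl⟩; exact ⟨y, hy, rfl⟩
      have hshift : (∫ g in F θ, psi hT hinv φL (Uop hT hinv h v) g ∂μG)
          = ∫ g in (h • F θ), psi hT hinv φL v g ∂μG := by
        rw [him, (measurePreserving_mul_left μG h).setIntegral_image_emb
          (Homeomorph.mulLeft h).measurableEmbedding]
        exact integral_congr_ae (ae_of_all _ fun g => psi_shift hT hinv φL v g h)
      have hd := abs_setIntegral_diff_le μG (psi_stronglyMeasurable hT hinv φL v)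
        (psi_bound hT hinv φL v) hsmul_meas (hFm θ) hsmul_fin (hFfin θ)
      have hRform : R (Uop hT hinv h v - v) θ
          = (μG (F θ)).toReal⁻¹ * ((∫ g in (h • F θ), psi hT hinv φL v g ∂μG)
              - ∫ g in F θ, psi hT hinv φL v g ∂μG) := by
        rw [hRsub]
        simp only [hRdef]
        rw [hshift]; ring
      rw [hRform, abs_mul, abs_of_nonneg (inv_nonneg.2 (hFpos θ).le), div_eq_inv_mul]
      rw [mul_comm ((μG (F θ)).toReal⁻¹) ((μG ((h • F θ) ∆ (F θ))).toReal)]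
      calc (μG (F θ)).toReal⁻¹
            * |(∫ g in (h • F θ), psi hT hinv φL v g ∂μG) - ∫ g in F θ, psi hT hinv φL v g ∂μG|
          ≤ (μG (F θ)).toReal⁻¹ * ((‖φL‖ * ‖v‖) * (μG ((h • F θ) ∆ (F θ))).toReal) :=
            mul_le_mul_of_nonneg_left hd (inv_nonneg.2 (hFpos θ).le)
        _ = ‖φL‖ * ‖v‖ * ((μG ((h • F θ) ∆ (F θ))).toReal * (μG (F θ)).toReal⁻¹) := by ring
    refine squeeze_zero_norm (fun θ => by
      simpa [Real.norm_eq_abs] using hkey θ) ?_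
    have := (hF.2.2 h).const_mul (‖φL‖ * ‖v‖)
    simpa using this
  -- span
  have hspan : ∀ c₀ ∈ Submodule.span ℝ {u : Lp ℝ 2 μ | ∃ h v, u = Uop hT hinv h v - v},
      Tendsto (R c₀) atTop (𝓝 0) := by
    intro c₀ hc₀
    induction hc₀ using Submodule.span_induction with
    | mem u hu => obtain ⟨h, v, rfl⟩ := hu; exact hgen h v
    | zero =>
      have h0 : ∀ θ, R 0 θ = 0 := by
        intro θ
        have hz : ∀ g : G, psi hT hinv φL (0 : Lp ℝ 2 μ) g = 0 := by
          intro g; simp [psi, map_zero]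
        simp only [hRdef]
        rw [integral_congr_ae (ae_of_all _ fun g => hz g)]
        simp
      have heq : R (0 : Lp ℝ 2 μ) = fun _ => (0:ℝ) := funext h0
      rw [heq]
      exact tendsto_const_nhds
    | add u v hu hv hu' hv' =>
      have h0 : ∀ θ, R 0 θ = 0 := by
        intro θ
        have hz : ∀ g : G, psi hT hinv φL (0 : Lp ℝ 2 μ) g = 0 := by
          intro g; simp [psi, map_zero]
        simp only [hRdef]
        rw [integral_congr_ae (ae_of_all _ fun g => hz g)]
        simp
      have hadd : ∀ θ, R (u + v) θ = R u θ + R v θ := by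
        intro θ
        have h2 : u + v = u - (0 - v) := by abel
        rw [h2, hRsub, hRsub, h0]; ring
      have htt := hu'.add hv'
      rw [add_zero] at htt
      exact Tendsto.congr (fun θ => (hadd θ).symm) htt
    | smul a u hu hu' =>
      have hRsmul : ∀ θ, R (a • u) θ = a * R u θ := by
        intro θ
        have h1 : (∫ g in F θ, psi hT hinv φL (a • u) g ∂μG)
            = a * ∫ g in F θ, psi hT hinv φL u g ∂μG := by
          rw [← integral_const_mul]
          refine integral_congr_ae (ae_of_all _ fun g => ?_)
          simp [psi, _root_.map_smul, inner_smul_right]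
        simp only [hRdef]; rw [h1]; ring
      have htt := hu'.const_mul a
      rw [mul_zero] at htt
      exact Tendsto.congr (fun θ => (hRsmul θ).symm) htt
  -- closure
  have hc' : c ∈ closure ((Submodule.span ℝ
      {u : Lp ℝ 2 μ | ∃ h v, u = Uop hT hinv h v - v} : Submodule ℝ (Lp ℝ 2 μ)) : Set _) := by
    rw [← Submodule.topologicalClosure_coe]; exact hc
  rw [Metric.tendsto_nhds]
  intro δ hδ
  have hden : (0:ℝ) < δ / (2 * (‖φL‖ + 1)) := by positivity
  obtain ⟨c₀, hc₀mem, hc₀close⟩ := SeminormedAddCommGroup.mem_closure_iff.1 hc' _ hden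
  have h0 := hspan c₀ hc₀mem
  have hhalf : (0:ℝ) < δ / 2 := by linarith
  have hev := (Metric.tendsto_nhds.1 h0) (δ / 2) hhalf
  filter_upwards [hev] with θ hθ
  have hdiff : |R c θ - R c₀ θ| ≤ ‖φL‖ * ‖c - c₀‖ := by
    rw [← hRsub]; exact hRbound _ θ
  have hbd : ‖φL‖ * ‖c - c₀‖ < δ / 2 := by
    have h1 : ‖φL‖ * ‖c - c₀‖ ≤ ‖φL‖ * (δ / (2 * (‖φL‖ + 1))) :=
      mul_le_mul_of_nonneg_left hc₀close.le (norm_nonneg _)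
    have h2 : ‖φL‖ * (δ / (2 * (‖φL‖ + 1))) < δ / 2 := by
      rw [mul_div_assoc']
      rw [div_lt_div_iff₀ (by positivity) (by norm_num : (0:ℝ) < 2)]
      nlinarith [norm_nonneg φL]
    linarith
  have h3 : dist (R c₀ θ) 0 < δ / 2 := hθ
  rw [Real.dist_eq, sub_zero] at h3 ⊢
  calc |R c θ| ≤ |R c₀ θ| + |R c θ - R c₀ θ| := by
        have := abs_sub_abs_le_abs_sub (R c θ) (R c₀ θ)
        have h4 := abs_add_le (R c₀ θ) (R c θ - R c₀ θ)
        have h5 : R c₀ θ + (R c θ - R c₀ θ) = R c θ := by ring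
        rw [h5] at h4; exact h4
    _ < δ / 2 + δ / 2 := add_lt_add h3 (lt_of_le_of_lt hdiff hbd)
    _ = δ := by ring

theorem tendsto_avg_f (F : Θ → Set G) (hF : IsFolnerNet μG F) :
    Tendsto (fun θ => (μG (F θ)).toReal⁻¹ * ∫ g in F θ, psi hT hinv φL φL g ∂μG)
      atTop (𝓝 (‖wf hT hinv φL‖ ^ 2)) := by
  have hFfin : ∀ θ, μG (F θ) ≠ ⊤ := fun θ => (hF.1 θ).measure_lt_top.ne
  have hFpos : ∀ θ, 0 < (μG (F θ)).toReal := fun θ =>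
    ENNReal.toReal_pos (hF.2.1 θ).ne' (hFfin θ)
  have hmem : ((Kc hT hinv).orthogonalProjectionOnto φL : Lp ℝ 2 μ) ∈ Kc hT hinv :=
    SetLike.coe_mem _
  have h0 := tendsto_avg_zero μG hT hinv φL F hF hmem
  have heq : ∀ θ, (μG (F θ)).toReal⁻¹ * ∫ g in F θ, psi hT hinv φL φL g ∂μG
      = (μG (F θ)).toReal⁻¹
          * (∫ g in F θ, psi hT hinv φL
              (((Kc hT hinv).orthogonalProjectionOnto φL : Lp ℝ 2 μ)) g ∂μG)
        + ‖wf hT hinv φL‖ ^ 2 := by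
    intro θ
    have h1 : (∫ g in F θ, psi hT hinv φL φL g ∂μG)
        = (∫ g in F θ, psi hT hinv φL
            (((Kc hT hinv).orthogonalProjectionOnto φL : Lp ℝ 2 μ)) g ∂μG)
          + ∫ g in F θ, (‖wf hT hinv φL‖ ^ 2 : ℝ) ∂μG := by
      rw [← integral_add (psi_integrableOn μG hT hinv φL _ (hFfin θ))
        (integrableOn_const (hFfin θ))]
      exact integral_congr_ae (ae_of_all _ fun g => psi_phi_decomp hT hinv φL g)
    rw [h1, setIntegral_const, measureReal_def, smul_eq_mul, mul_add, mul_comm ((μG (F θ)).toReal⁻¹)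
      ((μG (F θ)).toReal * ‖wf hT hinv φL‖ ^ 2), mul_assoc, mul_comm (‖wf hT hinv φL‖ ^ 2),
      ← mul_assoc, mul_inv_cancel₀ (hFpos θ).ne', one_mul]
  have := h0.add (tendsto_const_nhds (x := ‖wf hT hinv φL‖ ^ 2) (f := atTop (α := Θ)))
  rw [zero_add] at this
  exact Tendsto.congr (fun θ => (heq θ).symm) this

theorem eventually_density (F : Θ → Set G) (hF : IsFolnerNet μG F)
    {ε : ℝ} (hε : 0 < ε) :
    ∀ᶠ θ in atTop,
      ε / 2 / (‖φL‖ ^ 2 - (∫ x, φL x ∂μ) ^ 2 + ε)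
        < (μG ({g : G | (∫ x, φL x ∂μ) ^ 2 - ε < psi hT hinv φL φL g} ∩ F θ)).toReal
            / (μG (F θ)).toReal := by
  classical
  set I : ℝ := ∫ x, φL x ∂μ with hI
  set cc : ℝ := I ^ 2 with hcc
  set M : ℝ := ‖φL‖ ^ 2 with hM
  set W : ℝ := ‖wf hT hinv φL‖ ^ 2 with hW
  have hcW : cc ≤ W := mean_sq_le_norm_wf_sq hT hinv φL
  have hWM : W ≤ M := norm_wf_sq_le hT hinv φL
  have hden : (0:ℝ) < M - cc + ε := by linarith
  have hFm : ∀ θ, MeasurableSet (F θ) := fun θ => (hF.1 θ).isClosed.measurableSet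
  have hFfin : ∀ θ, μG (F θ) ≠ ⊤ := fun θ => (hF.1 θ).measure_lt_top.ne
  have hFpos : ∀ θ, 0 < (μG (F θ)).toReal := fun θ =>
    ENNReal.toReal_pos (hF.2.1 θ).ne' (hFfin θ)
  set S : Set G := {g : G | cc - ε < psi hT hinv φL φL g} with hS
  have hSm : MeasurableSet S :=
    measurableSet_lt measurable_const (psi_stronglyMeasurable hT hinv φL φL).measurable
  have hev := (tendsto_avg_f μG hT hinv φL F hF).eventually
    (eventually_gt_nhds (show W - ε / 2 < W by linarith))
  filter_upwards [hev] with θ hθ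
  set m : ℝ := (μG (F θ)).toReal with hm
  set s : ℝ := (μG (S ∩ F θ)).toReal with hs
  have hsm : (μG (F θ ∩ S)).toReal = s := by rw [Set.inter_comm]
  have hsle : s ≤ m := by
    rw [hs, hm]
    exact ENNReal.toReal_mono (hFfin θ) (measure_mono Set.inter_subset_right)
  have hs0 : 0 ≤ s := ENNReal.toReal_nonneg
  -- split the integral
  have hsplit : (∫ g in F θ ∩ S, psi hT hinv φL φL g ∂μG)
      + ∫ g in F θ \ S, psi hT hinv φL φL g ∂μG
      = ∫ g in F θ, psi hT hinv φL φL g ∂μG :=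
    integral_inter_add_diff hSm (psi_integrableOn μG hT hinv φL φL (hFfin θ))
  have hMnonneg : (0:ℝ) ≤ M := by positivity
  have hbound1 : (∫ g in F θ ∩ S, psi hT hinv φL φL g ∂μG) ≤ M * (μG (F θ ∩ S)).toReal := by
    have habs := norm_setIntegral_le_of_norm_le_const (μ := μG) (s := F θ ∩ S)
      (f := psi hT hinv φL φL) (C := M)
      (lt_of_le_of_lt (measure_mono Set.inter_subset_left) (hF.1 θ).measure_lt_top)
      (fun x _ => by
        have := psi_bound hT hinv φL φL x
        rw [Real.norm_eq_abs]
        calc |psi hT hinv φL φL x| ≤ ‖φL‖ * ‖φL‖ := this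
          _ = M := by rw [hM]; ring)
    rw [Real.norm_eq_abs] at habs
    exact le_trans (le_abs_self _) habs
  have hbound2 : (∫ g in F θ \ S, psi hT hinv φL φL g ∂μG)
      ≤ (cc - ε) * (μG (F θ \ S)).toReal := by
    have : (∫ g in F θ \ S, psi hT hinv φL φL g ∂μG)
        ≤ ∫ _ in F θ \ S, (cc - ε) ∂μG := by
      refine setIntegral_mono_on
        ((psi_integrableOn μG hT hinv φL φL (hFfin θ)).mono_set Set.diff_subset)
        (integrableOn_const (lt_of_le_of_lt
          (measure_mono Set.diff_subset) (hF.1 θ).measure_lt_top).ne)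
        ((hFm θ).diff hSm) ?_
      intro x hx
      have : ¬ (cc - ε < psi hT hinv φL φL x) := hx.2
      linarith [not_lt.1 this]
    rw [setIntegral_const, smul_eq_mul, mul_comm] at this
    exact this
  have hdiffm : (μG (F θ \ S)).toReal = m - (μG (F θ ∩ S)).toReal := by
    have h1 : μG (F θ ∩ S) + μG (F θ \ S) = μG (F θ) := measure_inter_add_diff _ hSm
    have h2 : (μG (F θ ∩ S)).toReal + (μG (F θ \ S)).toReal = m := by
      rw [hm, ← h1, ENNReal.toReal_add
        (ne_top_of_le_ne_top (hFfin θ) (measure_mono Set.inter_subset_left))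
        (ne_top_of_le_ne_top (hFfin θ) (measure_mono Set.diff_subset))]
    linarith
  have havg : m * (W - ε / 2) < ∫ g in F θ, psi hT hinv φL φL g ∂μG := by
    have h1 : W - ε / 2 < m⁻¹ * ∫ g in F θ, psi hT hinv φL φL g ∂μG := hθ
    have h2 := mul_lt_mul_of_pos_left h1 (hFpos θ)
    rw [← mul_assoc, mul_inv_cancel₀ (hFpos θ).ne', one_mul] at h2
    exact h2
  have hkey : m * (ε / 2) < s * (M - cc + ε) := by
    have := hsplit
    rw [hsm] at hbound1
    rw [hdiffm, hsm] at hbound2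
    nlinarith [havg, hbound1, hbound2, hcW]
  rw [div_lt_div_iff₀ hden (hFpos θ)]
  calc ε / 2 * m = m * (ε / 2) := by ring
    _ < s * (M - cc + ε) := hkey
    _ = (μG (S ∩ F θ)).toReal * (M - cc + ε) := by rw [hs]

end KhinAux4

namespace KhinAux5
open KhinAux KhinAux2 KhinAux3 KhinAux4 MeasureTheory.Measure

theorem isFolnerNet_mul_right {Θ : Type} [Preorder Θ]
    {G : Type} [Group G] [TopologicalSpace G] [IsTopologicalGroup G] [LocallyCompactSpace G]
    [T2Space G] [MeasurableSpace G] [BorelSpace G]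
    (μG : Measure G) [μG.IsHaarMeasure]
    (F : Θ → Set G) (hF : IsFolnerNet μG F) (b : Θ → G) :
    IsFolnerNet μG (fun θ => (fun x => x * b θ) '' F θ) := by
  classical
  have key : ∀ (g₀ : G) (A : Set G), MeasurableSet A → IsCompact (closure A) →
      μG ((fun x => x * g₀) '' A)
        = (haarScalarFactor (Measure.map (fun x => x * g₀⁻¹) μG) μG : ℝ≥0∞) * μG A := by
    intro g₀ A hAm hAc
    have him : (fun x => x * g₀) '' A = (fun x => x * g₀⁻¹) ⁻¹' A := by
      ext x; constructor
      · rintro ⟨y, hy, rfl⟩; simpa [mul_assoc] using hy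
      · intro hx; exact ⟨x * g₀⁻¹, hx, by simp [mul_assoc]⟩
    rw [him, ← Measure.map_apply (continuous_mul_right g₀⁻¹).measurable hAm]
    have hsc := measure_isMulInvariant_eq_smul_of_isCompact_closure
      (Measure.map (fun x => x * g₀⁻¹) μG) μG hAc
    rw [hsc, ENNReal.smul_def, smul_eq_mul]
  have hcpos : ∀ g₀ : G,
      0 < haarScalarFactor (Measure.map (fun x => x * g₀⁻¹) μG) μG := by
    intro g₀
    exact haarScalarFactor_pos_of_isHaarMeasure _ μG
  have hFm : ∀ θ, MeasurableSet (F θ) := fun θ => (hF.1 θ).isClosed.measurableSet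
  have hclosF : ∀ θ, IsCompact (closure (F θ)) := fun θ => by
    rw [(hF.1 θ).isClosed.closure_eq]; exact hF.1 θ
  refine ⟨fun θ => (hF.1 θ).image (continuous_mul_right (b θ)), fun θ => ?_, fun g => ?_⟩
  · rw [key (b θ) (F θ) (hFm θ) (hclosF θ)]
    have h1 : (haarScalarFactor (Measure.map (fun x => x * (b θ)⁻¹) μG) μG : ℝ≥0∞) ≠ 0 := by
      exact_mod_cast (hcpos (b θ)).ne'
    exact ENNReal.mul_pos h1 (hF.2.1 θ).ne'
  · -- tendsto
    have heq : ∀ θ, (μG ((g • ((fun x => x * b θ) '' F θ)) ∆ ((fun x => x * b θ) '' F θ))).toReal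
          / (μG ((fun x => x * b θ) '' F θ)).toReal
        = (μG ((g • F θ) ∆ (F θ))).toReal / (μG (F θ)).toReal := by
      intro θ
      have hsm : ∀ (S : Set G), g • S = (fun x => g * x) '' S := by
        intro S; ext x; constructor
        · rintro ⟨y, hy, rfl⟩; exact ⟨y, hy, rfl⟩
        · rintro ⟨y, hy, rfl⟩; exact ⟨y, hy, rfl⟩
      have hcomm : g • ((fun x => x * b θ) '' F θ) = (fun x => x * b θ) '' (g • F θ) := by
        rw [hsm, hsm, Set.image_image, Set.image_image]
        apply Set.image_congr'
        intro x; rw [mul_assoc]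
      have hsd : (g • ((fun x => x * b θ) '' F θ)) ∆ ((fun x => x * b θ) '' F θ)
          = (fun x => x * b θ) '' ((g • F θ) ∆ (F θ)) := by
        rw [hcomm, Set.image_symmDiff (mul_left_injective (b θ))]
      have hmeas1 : MeasurableSet ((g • F θ) ∆ (F θ)) := by
        have h1 : MeasurableSet (g • F θ) := ((hF.1 θ).smul g).isClosed.measurableSet
        exact h1.symmDiff (hFm θ)
      have hclos1 : IsCompact (closure ((g • F θ) ∆ (F θ))) := by
        refine IsCompact.closure_of_subset (((hF.1 θ).smul g).union (hF.1 θ)) ?_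
        exact Set.symmDiff_subset_union
      rw [hsd, key (b θ) _ hmeas1 hclos1, key (b θ) (F θ) (hFm θ) (hclosF θ)]
      rw [ENNReal.toReal_mul, ENNReal.toReal_mul]
      rw [ENNReal.coe_toReal]
      exact mul_div_mul_left _ _ (NNReal.coe_ne_zero.2 (hcpos (b θ)).ne')
    have := hF.2.2 g
    exact Tendsto.congr (fun θ => (heq θ).symm) this

end KhinAux5

/-- **A Khintchine-type recurrence theorem for amenable groups** (Theorem 0.9 of the
paper).  Let `G` be a σ-compact amenable group acting Borel-measurably by continuous
transformations on a compact metric space `X`, preserving a Borel probability measure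
`μ` (not necessarily ergodic).  If `φ ∈ L²(μ)`, `φ ≥ 0` a.e. and `∫ φ dμ > 0`, then
for every `ε > 0` the set `𝓗(φ,ε) = {g : ∫ φ·(φ ∘ T_g) dμ > (∫ φ dμ)² − ε}` has
positive lower density along every Følner sequence, and is syndetic in `G`. -/
theorem khintchine_recurrence_amenable
    {G : Type} [Group G] [TopologicalSpace G] [IsTopologicalGroup G] [LocallyCompactSpace G]
    [T2Space G] [MeasurableSpace G] [BorelSpace G] [SigmaCompactSpace G]
    (μG : Measure G) [μG.IsHaarMeasure] (hAmenable : Nonempty (FolnerNet μG))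
    {X : Type} [MetricSpace X] [CompactSpace X] [MeasurableSpace X] [BorelSpace X]
    (T : G → X → X) (hT : IsBorelAction G T) (hTcont : ∀ g : G, Continuous (T g))
    (μ : Measure X) [IsProbabilityMeasure μ] (hinv : ∀ g : G, Measure.map (T g) μ = μ)
    (φ : X → ℝ) (hφ : MemLp φ 2 μ) (hpos : 0 ≤ᵐ[μ] φ) (hmean : 0 < ∫ x, φ x ∂μ)
    (ε : ℝ) (hε : 0 < ε) :
    -- 𝓗(φ,ε) has positive lower (Banach) density along every Følner sequence in G
    (∀ F : ℕ → Set G, IsFolnerNet μG F →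
      0 < Filter.liminf (fun n =>
        (μG ({g : G | (∫ x, φ x ∂μ) ^ 2 - ε < ∫ x, φ x * φ (T g x) ∂μ} ∩ F n)).toReal
          / (μG (F n)).toReal) atTop) ∧
    -- consequently 𝓗(φ,ε) is syndetic in G
    ∃ K : Set G, IsCompact K ∧
      ∀ g : G, ∃ k ∈ K, ∃ h : G,
        ((∫ x, φ x ∂μ) ^ 2 - ε < ∫ x, φ x * φ (T h x) ∂μ) ∧ g = k * h := by
  classical
  set φL : Lp ℝ 2 μ := hφ.toLp φ with hφLdef
  have hphi_ae : (φL : X → ℝ) =ᵐ[μ] φ := MemLp.coeFn_toLp hφ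
  have hfeq : ∀ g : G, (∫ x, φ x * φ (T g x) ∂μ) = KhinAux2.psi hT hinv φL φL g := by
    intro g
    rw [KhinAux2.psi_eq]
    refine integral_congr_ae ?_
    filter_upwards [hphi_ae, KhinAux.ae_comp hT hinv g hphi_ae] with x hx1 hx2
    rw [hx1, hx2]
  have hIeq : (∫ x, φ x ∂μ) = ∫ x, (φL : X → ℝ) x ∂μ := (integral_congr_ae hphi_ae).symm
  have hSeq : {g : G | (∫ x, φ x ∂μ) ^ 2 - ε < ∫ x, φ x * φ (T g x) ∂μ}
      = {g : G | (∫ x, (φL : X → ℝ) x ∂μ) ^ 2 - ε < KhinAux2.psi hT hinv φL φL g} := by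
    ext g
    simp only [Set.mem_setOf_eq]
    rw [hfeq g, hIeq]
  have hδpos : 0 < ε / 2 / (‖φL‖ ^ 2 - (∫ x, (φL : X → ℝ) x ∂μ) ^ 2 + ε) := by
    have h1 := KhinAux3.mean_sq_le_norm_wf_sq hT hinv φL
    have h2 := KhinAux3.norm_wf_sq_le hT hinv φL
    exact div_pos (by linarith) (by linarith)
  constructor
  · intro F hFol
    have hev := KhinAux4.eventually_density μG hT hinv φL F hFol hε
    rw [hSeq]
    refine lt_of_lt_of_le hδpos (le_liminf_of_le ?_ (hev.mono fun n h => h.le))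
    refine Filter.IsBoundedUnder.isCoboundedUnder_ge ?_
    refine ⟨1, Filter.eventually_map.2 (Filter.Eventually.of_forall fun n => ?_)⟩
    have hfin : μG (F n) ≠ ⊤ := (hFol.1 n).measure_lt_top.ne
    have hpos' : 0 < (μG (F n)).toReal := ENNReal.toReal_pos (hFol.2.1 n).ne' hfin
    refine (div_le_one hpos').2 ?_
    exact ENNReal.toReal_mono hfin (measure_mono Set.inter_subset_right)
  · by_contra hcon
    push_neg at hcon
    obtain ⟨N⟩ := hAmenable
    have hKinv : ∀ θ : N.ι, IsCompact ((N.F θ)⁻¹) := fun θ => (N.isFolner.1 θ).inv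
    choose b hb using fun θ : N.ι => hcon ((N.F θ)⁻¹) (hKinv θ)
    set F' : N.ι → Set G := fun θ => (fun x => x * b θ) '' N.F θ with hF'def
    have hF' : IsFolnerNet μG F' := KhinAux5.isFolnerNet_mul_right μG N.F N.isFolner b
    have hev := KhinAux4.eventually_density μG hT hinv φL F' hF' hε
    haveI : (atTop : Filter N.ι).NeBot := atTop_neBot_iff.2 ⟨inferInstance, inferInstance⟩
    obtain ⟨θ, hθ⟩ := hev.exists
    have hempty : {g : G | (∫ x, (φL : X → ℝ) x ∂μ) ^ 2 - ε
        < KhinAux2.psi hT hinv φL φL g} ∩ F' θ = ∅ := by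
      rw [← hSeq]
      ext h
      simp only [Set.mem_inter_iff, Set.mem_setOf_eq, Set.mem_empty_iff_false, iff_false,
        not_and]
      intro hh1 hh2
      obtain ⟨a, ha, rfl⟩ := hh2
      exact hb θ a⁻¹ (by simpa using ha) (a * b θ) hh1 (by group)
    rw [hempty] at hθ
    simp only [measure_empty, ENNReal.toReal_zero, zero_div] at hθ
    linarith
end

section
/- Let G↷_T X be a Borel action of an amenable group G by continuous maps of a locally compact Hausdorff space X to itself. Suppose there is a Følner net {F_θ : θ ∈ Θ} in G such that the Moore–Smith limit φ*(x) = lim_θ (1/|F_θ|) ∫_{F_θ} φ(T_g x) dg exists for every φ ∈ C_c(X) and every x ∈ X, and φ* is not identically zero for some φ ∈ C_c(X). Then there exists a nontrivial Borel measure μ on X such that: (i) μ(K) < ∞ for every compact K ⊆ X; (ii) μ(E) = inf{μ(V) : E ⊆ V, V open} for every Borel set E; (iii) μ(E) = sup{μ(K) : K ⊆ E, K compact} for every open set E and every Borel set E with μ(E) < ∞; and (iv) ∫_X φ dμ = ∫_X φ(T_g x) dμ(x) for every φ ∈ C_c(X) and every g ∈ G. In particular, if X is a locally compact σ-compact metric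 space, then μ is a σ-finite G-invariant measure for G↷_T X. -/
open Filter Topology ENNReal
open scoped symmDiff Pointwise

open MeasureTheory

section ContentAux
set_option linter.unusedSectionVars false
open Set

variable {X : Type} [TopologicalSpace X] [T2Space X] [LocallyCompactSpace X]

/-- Test functions for the Riesz content of a compact set `K`:
continuous, compactly supported, nonnegative, and `≥ 1` on `K`. -/
def rieszTest (K : Set X) : Set (X → ℝ) :=
  {f | Continuous f ∧ HasCompactSupport f ∧ (∀ x, 0 ≤ f x) ∧ ∀ x ∈ K, 1 ≤ f x}

/-- The Riesz content associated to a functional `Λ`. -/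
noncomputable def rieszCt (Λ : (X → ℝ) → ℝ) (K : Set X) : ℝ :=
  sInf (Λ '' rieszTest K)

lemma rieszTest_nonempty {K : Set X} (hK : IsCompact K) : (rieszTest K).Nonempty := by
  obtain ⟨f, hf1, -, hfc, hf01⟩ :=
    exists_continuous_one_zero_of_isCompact hK isClosed_empty (Set.disjoint_empty K)
  exact ⟨⇑f, f.continuous, hfc, fun x => (hf01 x).1, fun x hx => by
    simpa using (hf1 hx).ge⟩

variable {Λ : (X → ℝ) → ℝ}

section
variable (hpos : ∀ f : X → ℝ, Continuous f → HasCompactSupport f → (∀ x, 0 ≤ f x) → 0 ≤ Λ f)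

include hpos

lemma rieszBddBelow (K : Set X) : BddBelow (Λ '' rieszTest K) := by
  refine ⟨0, ?_⟩
  rintro r ⟨f, hf, rfl⟩
  exact hpos f hf.1 hf.2.1 hf.2.2.1

lemma rieszCt_nonneg (K : Set X) : 0 ≤ rieszCt Λ K := by
  apply Real.sInf_nonneg
  rintro r ⟨f, hf, rfl⟩
  exact hpos f hf.1 hf.2.1 hf.2.2.1

lemma rieszCt_le {K : Set X} {f : X → ℝ} (hf : f ∈ rieszTest K) : rieszCt Λ K ≤ Λ f :=
  csInf_le (rieszBddBelow hpos K) ⟨f, hf, rfl⟩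

lemma le_rieszCt {K : Set X} (hK : IsCompact K) {c : ℝ}
    (h : ∀ f ∈ rieszTest K, c ≤ Λ f) : c ≤ rieszCt Λ K := by
  refine le_csInf ((rieszTest_nonempty hK).image Λ) ?_
  rintro r ⟨f, hf, rfl⟩
  exact h f hf

lemma rieszCt_mono {K₁ K₂ : Set X} (h : K₁ ⊆ K₂) (hK₂ : IsCompact K₂) :
    rieszCt Λ K₁ ≤ rieszCt Λ K₂ := by
  refine csInf_le_csInf (rieszBddBelow hpos K₁) ((rieszTest_nonempty hK₂).image Λ) ?_
  refine Set.image_mono ?_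
  rintro f ⟨hc, hs, hnn, hK⟩
  exact ⟨hc, hs, hnn, fun x hx => hK x (h hx)⟩

variable (hadd : ∀ f g : X → ℝ, Continuous f → HasCompactSupport f → Continuous g →
    HasCompactSupport g → Λ (f + g) = Λ f + Λ g)

include hadd

lemma rieszCt_sup_le {K₁ K₂ : Set X} (hK₁ : IsCompact K₁) (hK₂ : IsCompact K₂) :
    rieszCt Λ (K₁ ∪ K₂) ≤ rieszCt Λ K₁ + rieszCt Λ K₂ := by
  refine le_of_forall_pos_le_add ?_
  intro ε hε
  obtain ⟨r₁, hr₁mem, hr₁⟩ :=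
    Real.lt_sInf_add_pos ((rieszTest_nonempty hK₁).image Λ) (half_pos hε)
  obtain ⟨r₂, hr₂mem, hr₂⟩ :=
    Real.lt_sInf_add_pos ((rieszTest_nonempty hK₂).image Λ) (half_pos hε)
  obtain ⟨f₁, hf₁, rfl⟩ := hr₁mem
  obtain ⟨f₂, hf₂, rfl⟩ := hr₂mem
  have hmem : f₁ + f₂ ∈ rieszTest (K₁ ∪ K₂) := by
    refine ⟨hf₁.1.add hf₂.1, hf₁.2.1.add hf₂.2.1, fun x => add_nonneg (hf₁.2.2.1 x)
      (hf₂.2.2.1 x), ?_⟩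
    rintro x (hx | hx)
    · calc (1:ℝ) ≤ f₁ x := hf₁.2.2.2 x hx
        _ ≤ f₁ x + f₂ x := le_add_of_nonneg_right (hf₂.2.2.1 x)
    · calc (1:ℝ) ≤ f₂ x := hf₂.2.2.2 x hx
        _ ≤ f₁ x + f₂ x := le_add_of_nonneg_left (hf₁.2.2.1 x)
  calc rieszCt Λ (K₁ ∪ K₂) ≤ Λ (f₁ + f₂) := rieszCt_le hpos hmem
    _ = Λ f₁ + Λ f₂ := hadd _ _ hf₁.1 hf₁.2.1 hf₂.1 hf₂.2.1
    _ ≤ rieszCt Λ K₁ + rieszCt Λ K₂ + ε := by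
        unfold rieszCt; linarith

lemma rieszCt_sup_disjoint {K₁ K₂ : Set X} (hK₁ : IsCompact K₁) (hK₂ : IsCompact K₂)
    (hd : Disjoint K₁ K₂) :
    rieszCt Λ (K₁ ∪ K₂) = rieszCt Λ K₁ + rieszCt Λ K₂ := by
  refine le_antisymm (rieszCt_sup_le hpos hadd hK₁ hK₂) ?_
  refine le_rieszCt hpos (hK₁.union hK₂) ?_
  intro f hf
  obtain ⟨g, hg1, hg0, hgc, hg01⟩ :=
    exists_continuous_one_zero_of_isCompact hK₁ hK₂.isClosed hd
  set f₁ : X → ℝ := fun x => f x * g x with hf₁def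
  set f₂ : X → ℝ := fun x => f x * (1 - g x) with hf₂def
  have hf₁mem : f₁ ∈ rieszTest K₁ := by
    refine ⟨hf.1.mul g.continuous, hf.2.1.mul_right, fun x => mul_nonneg (hf.2.2.1 x)
      (hg01 x).1, fun x hx => ?_⟩
    have : g x = 1 := hg1 hx
    simp only [hf₁def, this, mul_one]
    exact hf.2.2.2 x (Or.inl hx)
  have hf₂mem : f₂ ∈ rieszTest K₂ := by
    refine ⟨hf.1.mul (continuous_const.sub g.continuous), hf.2.1.mul_right,
      fun x => mul_nonneg (hf.2.2.1 x) (sub_nonneg.2 (hg01 x).2), fun x hx => ?_⟩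
    have : g x = 0 := hg0 hx
    simp only [hf₂def, this, sub_zero, mul_one]
    exact hf.2.2.2 x (Or.inr hx)
  have hsum : f₁ + f₂ = f := by
    funext x; simp only [Pi.add_apply, hf₁def, hf₂def]; ring
  calc rieszCt Λ K₁ + rieszCt Λ K₂ ≤ Λ f₁ + Λ f₂ :=
        add_le_add (rieszCt_le hpos hf₁mem) (rieszCt_le hpos hf₂mem)
    _ = Λ (f₁ + f₂) := (hadd _ _ hf₁mem.1 hf₁mem.2.1 hf₂mem.1 hf₂mem.2.1).symm
    _ = Λ f := by rw [hsum]

end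
section
open TopologicalSpace in
/-- The bundled Riesz content. -/
noncomputable def rieszContentOf
    (hpos : ∀ f : X → ℝ, Continuous f → HasCompactSupport f → (∀ x, 0 ≤ f x) → 0 ≤ Λ f)
    (hadd : ∀ f g : X → ℝ, Continuous f → HasCompactSupport f → Continuous g →
      HasCompactSupport g → Λ (f + g) = Λ f + Λ g) : Content X where
  toFun K := Real.toNNReal (rieszCt Λ K)
  mono' K₁ K₂ h := Real.toNNReal_mono (rieszCt_mono hpos h K₂.isCompact)
  sup_disjoint' K₁ K₂ hd _ _ := by
    rw [Compacts.coe_sup,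
      rieszCt_sup_disjoint hpos hadd K₁.isCompact K₂.isCompact hd,
      Real.toNNReal_add (rieszCt_nonneg hpos _) (rieszCt_nonneg hpos _)]
  sup_le' K₁ K₂ := by
    rw [← Real.toNNReal_add (rieszCt_nonneg hpos _) (rieszCt_nonneg hpos _)]
    apply Real.toNNReal_mono
    rw [Compacts.coe_sup]
    exact rieszCt_sup_le hpos hadd K₁.isCompact K₂.isCompact

end

lemma rieszCt_image (e : X ≃ₜ X)
    (hinv : ∀ f : X → ℝ, Continuous f → HasCompactSupport f → Λ (f ∘ e) = Λ f)
    (hinv' : ∀ f : X → ℝ, Continuous f → HasCompactSupport f → Λ (f ∘ e.symm) = Λ f)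
    (K : Set X) : rieszCt Λ (e '' K) = rieszCt Λ K := by
  unfold rieszCt
  congr 1
  apply Set.Subset.antisymm
  · rintro r ⟨f, ⟨hc, hs, hnn, hK⟩, rfl⟩
    refine ⟨f ∘ e, ⟨hc.comp e.continuous, hs.comp_homeomorph e, fun x => hnn _,
      fun x hx => hK _ ⟨x, hx, rfl⟩⟩, hinv f hc hs⟩
  · rintro r ⟨f, ⟨hc, hs, hnn, hK⟩, rfl⟩
    refine ⟨f ∘ e.symm, ⟨hc.comp e.symm.continuous, hs.comp_homeomorph e.symm,
      fun x => hnn _, ?_⟩, hinv' f hc hs⟩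
    rintro y ⟨x, hx, rfl⟩
    simpa using hK x hx

end ContentAux


/-- **Existence of σ-finite invariant measures** (Proposition 0.10 of the paper).
Let `G ↷ X` be a Borel action of an amenable group `G` by continuous maps of a locally
compact Hausdorff space `X`.  Suppose that along some Følner net `{F_θ}` the ergodic
averages of every `φ ∈ C_c(X)` converge pointwise everywhere to `φ*`, and that
`φ* ≢ 0` for some `φ ∈ C_c(X)`.  Then there is a nontrivial Borel measure `μ` on `X`
which is finite on compacta, outer regular, inner regular on open sets and on sets of
finite measure, and satisfies `∫ φ dμ = ∫ T_g φ dμ` for every `φ ∈ C_c(X)` and `g ∈ G`.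
If moreover `X` is σ-compact and metrizable, then `μ` is a σ-finite invariant measure
for `G ↷ X`. -/
theorem sigma_finite_invariant_measure
    {G : Type} [Group G] [TopologicalSpace G] [IsTopologicalGroup G] [LocallyCompactSpace G]
    [T2Space G] [MeasurableSpace G] [BorelSpace G]
    (μG : Measure G) [μG.IsHaarMeasure]
    {X : Type} [TopologicalSpace X] [T2Space X] [LocallyCompactSpace X]
    [MeasurableSpace X] [BorelSpace X]
    (T : G → X → X) (hT : IsBorelAction G T) (hTcont : ∀ g : G, Continuous (T g))
    {Θ : Type} [Preorder Θ] [Nonempty Θ] [IsDirected Θ (· ≤ ·)]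
    (F : Θ → Set G) (hF : IsFolnerNet μG F)
    (limA : (X → ℝ) → X → ℝ)
    (hlim : ∀ φ : X → ℝ, Continuous φ → HasCompactSupport φ →
      ∀ x : X, Tendsto (fun θ => ergAvg μG T (F θ) φ x) atTop (𝓝 (limA φ x)))
    (hnonzero : ∃ φ : X → ℝ, Continuous φ ∧ HasCompactSupport φ ∧ ∃ x : X, limA φ x ≠ 0) :
    ∃ μ : Measure X, μ ≠ 0 ∧
      -- (i) finite on compacta
      (∀ K : Set X, IsCompact K → μ K < ∞) ∧
      -- (ii) outer regularity
      (∀ E : Set X, MeasurableSet E →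
        μ E = ⨅ (V : Set X) (_ : E ⊆ V) (_ : IsOpen V), μ V) ∧
      -- (iii) inner regularity on open sets and on Borel sets of finite measure
      (∀ E : Set X, (IsOpen E ∨ (MeasurableSet E ∧ μ E < ∞)) →
        μ E = ⨆ (K : Set X) (_ : K ⊆ E) (_ : IsCompact K), μ K) ∧
      -- (iv) invariance against compactly supported continuous functions
      (∀ g : G, ∀ φ : X → ℝ, Continuous φ → HasCompactSupport φ →
        ∫ x, φ x ∂μ = ∫ x, φ (T g x) ∂μ) ∧
      -- in particular: on a locally compact σ-compact metrizable space, μ is a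
      -- σ-finite invariant measure for the action
      (SigmaCompactSpace X → TopologicalSpace.MetrizableSpace X →
        SigmaFinite μ ∧ ∀ g : G, Measure.map (T g) μ = μ) := by
  classical
  obtain ⟨φ₀, hφ₀c, hφ₀s, x₀, hx₀⟩ := hnonzero
  obtain ⟨hFcpt, hFpos, hFol⟩ := hF
  haveI : (atTop : Filter Θ).NeBot := Filter.atTop_neBot_iff.mpr ⟨‹_›, ‹_›⟩
  set Λ : (X → ℝ) → ℝ := fun φ => limA φ x₀ with hΛdef
  -- measurability of orbit maps
  have horb : ∀ x : X, Measurable fun g : G => T g x := fun x =>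
    hT.measurable.comp (measurable_id.prodMk measurable_const)
  have hIntOn : ∀ φ : X → ℝ, Continuous φ → HasCompactSupport φ → ∀ (x : X)
      (s : Set G), μG s ≠ ∞ → IntegrableOn (fun g => φ (T g x)) s μG := by
    intro φ hc hs x s hsf
    obtain ⟨C, hC⟩ := hs.exists_bound_of_continuous hc
    exact Measure.integrableOn_of_bounded hsf
      ((hc.measurable.comp (horb x)).aestronglyMeasurable) (MeasureTheory.ae_of_all _ fun g => hC _)
  have hFfin : ∀ θ, μG (F θ) ≠ ∞ := fun θ => (hFcpt θ).measure_lt_top.ne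
  -- the homeomorphisms given by the action
  let e : G → X ≃ₜ X := fun g =>
    { toFun := T g
      invFun := T g⁻¹
      left_inv := fun x => by rw [hT.mul_act, inv_mul_cancel, hT.one_act]
      right_inv := fun x => by rw [hT.mul_act, mul_inv_cancel, hT.one_act]
      continuous_toFun := hTcont g
      continuous_invFun := hTcont g⁻¹ }
  -- additivity of Λ
  have hadd : ∀ f g : X → ℝ, Continuous f → HasCompactSupport f → Continuous g →
      HasCompactSupport g → Λ (f + g) = Λ f + Λ g := by
    intro f g hfc hfs hgc hgs
    refine tendsto_nhds_unique (hlim (f + g) (hfc.add hgc) (hfs.add hgs) x₀) ?_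
    refine ((hlim f hfc hfs x₀).add (hlim g hgc hgs x₀)).congr fun θ => ?_
    unfold ergAvg
    simp only [Pi.add_apply]
    rw [MeasureTheory.integral_add (hIntOn f hfc hfs x₀ _ (hFfin θ))
      (hIntOn g hgc hgs x₀ _ (hFfin θ))]
    ring
  -- scalar homogeneity of Λ
  have hsmul : ∀ (c : ℝ) (f : X → ℝ), Continuous f → HasCompactSupport f →
      Λ (fun x => c * f x) = c * Λ f := by
    intro c f hfc hfs
    refine tendsto_nhds_unique
      (hlim _ (continuous_const.mul hfc) hfs.mul_left x₀) ?_
    refine ((hlim f hfc hfs x₀).const_mul c).congr fun θ => ?_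
    unfold ergAvg
    simp only [Pi.mul_apply]
    rw [MeasureTheory.integral_const_mul]
    ring
  -- positivity of Λ
  have hpos : ∀ f : X → ℝ, Continuous f → HasCompactSupport f → (∀ x, 0 ≤ f x) →
      0 ≤ Λ f := by
    intro f hfc hfs hf0
    refine ge_of_tendsto (hlim f hfc hfs x₀) (Filter.Eventually.of_forall fun θ => ?_)
    unfold ergAvg
    exact mul_nonneg (inv_nonneg.2 ENNReal.toReal_nonneg)
      (MeasureTheory.setIntegral_nonneg (hFcpt θ).measurableSet fun g _ => hf0 _)
  -- monotonicity of Λ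
  have hmono : ∀ f g : X → ℝ, Continuous f → HasCompactSupport f → Continuous g →
      HasCompactSupport g → (∀ x, f x ≤ g x) → Λ f ≤ Λ g := by
    intro f g hfc hfs hgc hgs hfg
    set d : X → ℝ := fun x => g x + (-1 : ℝ) * f x with hd
    have hdc : Continuous d := hgc.add (continuous_const.mul hfc)
    have hds : HasCompactSupport d := hgs.add hfs.mul_left
    have hd0 : ∀ x, 0 ≤ d x := fun x => by simp only [hd]; linarith [hfg x]
    have : Λ (f + d) = Λ f + Λ d := hadd f d hfc hfs hdc hds
    have hfd : f + d = g := by funext x; simp only [Pi.add_apply, hd]; ring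
    rw [hfd] at this
    have := hpos d hdc hds hd0
    linarith
  -- invariance of Λ
  have hinv : ∀ (g : G) (φ : X → ℝ), Continuous φ → HasCompactSupport φ →
      Λ (fun x => φ (T g x)) = Λ φ := by
    intro g φ hφc hφs
    have hcomp : HasCompactSupport fun x => φ (T g x) := hφs.comp_homeomorph (e g)
    refine tendsto_nhds_unique (hlim _ (hφc.comp (hTcont g)) hcomp x₀) ?_
    set ψ : G → ℝ := fun h => φ (T h x₀) with hψ
    obtain ⟨C, hC⟩ := hφs.exists_bound_of_continuous hφc
    have hC0 : 0 ≤ C := le_trans (norm_nonneg _) (hC x₀)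
    have hIψ : ∀ s : Set G, μG s ≠ ∞ → IntegrableOn ψ s μG :=
      fun s hsf => hIntOn φ hφc hφs x₀ s hsf
    have hψm : AEStronglyMeasurable ψ μG :=
      (hφc.measurable.comp (horb x₀)).aestronglyMeasurable
    have hAcpt : ∀ θ, IsCompact (g • F θ) := fun θ => (hFcpt θ).smul g
    have hAfin : ∀ θ, μG (g • F θ) ≠ ∞ := fun θ => (hAcpt θ).measure_lt_top.ne
    -- rewrite the averages of the translated function
    have step1 : ∀ θ, ergAvg μG T (F θ) (fun x => φ (T g x)) x₀
        = (μG (F θ)).toReal⁻¹ * ∫ h in (g • F θ), ψ h ∂μG := by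
      intro θ
      unfold ergAvg
      congr 1
      have h1 : ∀ h : G, φ (T g (T h x₀)) = ψ (g * h) := fun h => by
        simp only [hψ, hT.mul_act]
      calc ∫ h in F θ, φ (T g (T h x₀)) ∂μG = ∫ h in F θ, ψ (g * h) ∂μG := by
            simp_rw [h1]
        _ = ∫ h in (g • F θ), ψ h ∂μG := by
            have hpre : (fun h : G => g * h) ⁻¹' (g • F θ) = F θ := by
              ext h
              simp [Set.mem_smul_set_iff_inv_smul_mem, smul_eq_mul, mul_assoc]
            conv_lhs => rw [← hpre]
            exact (MeasureTheory.measurePreserving_mul_left μG g).setIntegral_preimage_emb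
              (Homeomorph.mulLeft g).measurableEmbedding ψ _
    -- bound the difference of the averages
    have step2 : ∀ θ, |ergAvg μG T (F θ) (fun x => φ (T g x)) x₀ - ergAvg μG T (F θ) φ x₀|
        ≤ C * ((μG ((g • F θ) ∆ (F θ))).toReal / (μG (F θ)).toReal) := by
      intro θ
      rw [step1]
      have hB : MeasurableSet (F θ) := (hFcpt θ).measurableSet
      have hA : MeasurableSet (g • F θ) := (hAcpt θ).measurableSet
      have hint : ∫ h in (g • F θ), ψ h ∂μG - ∫ h in F θ, ψ h ∂μG
          = ∫ h in (g • F θ) \ F θ, ψ h ∂μG - ∫ h in F θ \ (g • F θ), ψ h ∂μG := by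
        have e1 : ∫ h in (g • F θ), ψ h ∂μG
            = ∫ h in (g • F θ) \ F θ, ψ h ∂μG + ∫ h in (g • F θ) ∩ F θ, ψ h ∂μG := by
          rw [← MeasureTheory.setIntegral_union Set.disjoint_sdiff_inter (hA.inter hB)
            ((hIψ _ ((measure_mono Set.diff_subset).trans_lt
              (hAcpt θ).measure_lt_top).ne))
            ((hIψ _ ((measure_mono Set.inter_subset_left).trans_lt
              (hAcpt θ).measure_lt_top).ne)), Set.diff_union_inter]
        have e2 : ∫ h in F θ, ψ h ∂μG
            = ∫ h in F θ \ (g • F θ), ψ h ∂μG + ∫ h in (g • F θ) ∩ F θ, ψ h ∂μG := by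
          rw [← MeasureTheory.setIntegral_union
            ((Set.disjoint_sdiff_inter (s := F θ) (t := g • F θ)).mono_right
              (Set.inter_comm (g • F θ) (F θ)).le)
            (hA.inter hB)
            ((hIψ _ ((measure_mono Set.diff_subset).trans_lt
              (hFcpt θ).measure_lt_top).ne))
            ((hIψ _ ((measure_mono Set.inter_subset_left).trans_lt
              (hAcpt θ).measure_lt_top).ne)),
            Set.inter_comm (g • F θ) (F θ), Set.diff_union_inter]
        rw [e1, e2]; ring
      have hbound : |∫ h in (g • F θ), ψ h ∂μG - ∫ h in F θ, ψ h ∂μG|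
          ≤ C * (μG ((g • F θ) ∆ (F θ))).toReal := by
        rw [hint]
        have n1 : |∫ h in (g • F θ) \ F θ, ψ h ∂μG| ≤ C * (μG ((g • F θ) \ F θ)).toReal := by
          refine MeasureTheory.norm_setIntegral_le_of_norm_le_const_ae'
            ((measure_mono Set.diff_subset).trans_lt (hAcpt θ).measure_lt_top)
            (MeasureTheory.ae_of_all _ fun x _ => hC _)
        have n2 : |∫ h in F θ \ (g • F θ), ψ h ∂μG| ≤ C * (μG (F θ \ (g • F θ))).toReal := by
          refine MeasureTheory.norm_setIntegral_le_of_norm_le_const_ae'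
            ((measure_mono Set.diff_subset).trans_lt (hFcpt θ).measure_lt_top)
            (MeasureTheory.ae_of_all _ fun x _ => hC _)
        have hsd : μG ((g • F θ) ∆ (F θ))
            = μG ((g • F θ) \ F θ) + μG (F θ \ (g • F θ)) := by
          rw [Set.symmDiff_def]
          exact measure_union disjoint_sdiff_sdiff (hB.diff hA)
        have hfin1 : μG ((g • F θ) \ F θ) ≠ ∞ :=
          ((measure_mono Set.diff_subset).trans_lt (hAcpt θ).measure_lt_top).ne
        have hfin2 : μG (F θ \ (g • F θ)) ≠ ∞ :=
          ((measure_mono Set.diff_subset).trans_lt (hFcpt θ).measure_lt_top).ne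
        have htr : (μG ((g • F θ) ∆ (F θ))).toReal
            = (μG ((g • F θ) \ F θ)).toReal + (μG (F θ \ (g • F θ))).toReal := by
          rw [hsd, ENNReal.toReal_add hfin1 hfin2]
        calc |∫ h in (g • F θ) \ F θ, ψ h ∂μG - ∫ h in F θ \ (g • F θ), ψ h ∂μG|
            ≤ |∫ h in (g • F θ) \ F θ, ψ h ∂μG| + |∫ h in F θ \ (g • F θ), ψ h ∂μG| :=
              abs_sub _ _
          _ ≤ C * (μG ((g • F θ) \ F θ)).toReal + C * (μG (F θ \ (g • F θ))).toReal :=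
              add_le_add n1 n2
          _ = C * (μG ((g • F θ) ∆ (F θ))).toReal := by rw [htr]; ring
      have hψB : ergAvg μG T (F θ) φ x₀ = (μG (F θ)).toReal⁻¹ * ∫ h in F θ, ψ h ∂μG := rfl
      rw [hψB, ← mul_sub, abs_mul, abs_of_nonneg (inv_nonneg.2 ENNReal.toReal_nonneg),
        div_eq_mul_inv]
      calc (μG (F θ)).toReal⁻¹ * |∫ h in (g • F θ), ψ h ∂μG - ∫ h in F θ, ψ h ∂μG|
          ≤ (μG (F θ)).toReal⁻¹ * (C * (μG ((g • F θ) ∆ (F θ))).toReal) :=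
            mul_le_mul_of_nonneg_left hbound (inv_nonneg.2 ENNReal.toReal_nonneg)
        _ = C * ((μG ((g • F θ) ∆ (F θ))).toReal * (μG (F θ)).toReal⁻¹) := by ring
    have h0 : Tendsto (fun θ => ergAvg μG T (F θ) (fun x => φ (T g x)) x₀
        - ergAvg μG T (F θ) φ x₀) atTop (𝓝 0) := by
      have hten : Tendsto (fun θ =>
          C * ((μG ((g • F θ) ∆ (F θ))).toReal / (μG (F θ)).toReal)) atTop (𝓝 0) := by
        simpa using (hFol g).const_mul C
      exact squeeze_zero_norm (fun θ => by
        simpa [Real.norm_eq_abs] using step2 θ) hten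
    have := h0.add (hlim φ hφc hφs x₀)
    simpa [hΛdef, Function.comp_def] using this
  -- the content and the measure
  let μC : MeasureTheory.Content X := rieszContentOf hpos hadd
  let μ : Measure X := μC.measure
  have hμdef : ∀ (K : TopologicalSpace.Compacts X),
      μC K = (Real.toNNReal (rieszCt Λ (K : Set X)) : ℝ≥0∞) := fun K => rfl
  -- invariance of the measure
  have hKinv : ∀ g : G, ∀ ⦃K : TopologicalSpace.Compacts X⦄,
      μC (K.map (e g) (e g).continuous) = μC K := by
    intro g K
    rw [hμdef, hμdef]
    have : rieszCt Λ ((K.map (e g) (e g).continuous : TopologicalSpace.Compacts X) : Set X)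
        = rieszCt Λ (K : Set X) := by
      rw [TopologicalSpace.Compacts.coe_map]
      exact rieszCt_image (e g) (fun f hc hs => hinv g f hc hs)
        (fun f hc hs => hinv g⁻¹ f hc hs) K
    rw [this]
  have hmap : ∀ g : G, Measure.map (T g) μ = μ := by
    intro g
    refine Measure.ext fun s hs => ?_
    rw [Measure.map_apply (hTcont g).measurable hs,
      μC.measure_apply (hs.preimage (hTcont g).measurable), μC.measure_apply hs]
    exact μC.outerMeasure_preimage (e g) (hKinv g) s
  haveI hreg : μ.Regular := μC.regular
  -- nontriviality
  have hμne : μ ≠ 0 := by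
    obtain ⟨φ, hφc, hφs, hφpos⟩ : ∃ φ : X → ℝ, Continuous φ ∧ HasCompactSupport φ ∧
        0 < Λ φ := by
      rcases hx₀.lt_or_gt with h | h
      · refine ⟨fun x => (-1 : ℝ) * φ₀ x, continuous_const.mul hφ₀c, hφ₀s.mul_left, ?_⟩
        rw [hsmul (-1) φ₀ hφ₀c hφ₀s]
        simp only [hΛdef] at h ⊢
        linarith
      · exact ⟨φ₀, hφ₀c, hφ₀s, h⟩
    obtain ⟨C, hC⟩ := hφs.exists_bound_of_continuous hφc
    have hM : (0 : ℝ) < C + 1 := by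
      have := le_trans (norm_nonneg (φ x₀)) (hC x₀); linarith
    have hlb : Λ φ / (C + 1) ≤ rieszCt Λ (tsupport φ) := by
      refine le_rieszCt hpos hφs ?_
      intro f hf
      have h1 : ∀ x, φ x ≤ (C + 1) * f x := by
        intro x
        by_cases hx : x ∈ tsupport φ
        · calc φ x ≤ |φ x| := le_abs_self _
            _ ≤ C := hC x
            _ = (C + 1) * 1 - 1 := by ring
            _ ≤ (C + 1) * f x - 0 := by
                have := hf.2.2.2 x hx
                nlinarith
            _ = (C + 1) * f x := by ring
        · rw [image_eq_zero_of_notMem_tsupport hx]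
          exact mul_nonneg hM.le (hf.2.2.1 x)
      have h2 : Λ φ ≤ Λ (fun x => (C + 1) * f x) :=
        hmono φ _ hφc hφs (continuous_const.mul hf.1) hf.2.1.mul_left h1
      rw [hsmul (C + 1) f hf.1 hf.2.1] at h2
      rw [div_le_iff₀ hM]
      linarith
    have hpos' : 0 < rieszCt Λ (tsupport φ) :=
      lt_of_lt_of_le (div_pos hφpos hM) hlb
    have hμK : 0 < μ (tsupport φ) := by
      have h1 : (μC ⟨tsupport φ, hφs⟩ : ℝ≥0∞) ≤ μC.outerMeasure (tsupport φ) :=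
        μC.le_outerMeasure_compacts ⟨tsupport φ, hφs⟩
      have h2 : μ (tsupport φ) = μC.outerMeasure (tsupport φ) :=
        μC.measure_apply (isClosed_tsupport φ).measurableSet
      have h3 : (0 : ℝ≥0∞) < μC ⟨tsupport φ, hφs⟩ := by
        rw [hμdef]
        exact_mod_cast ENNReal.coe_pos.2 (Real.toNNReal_pos.2 hpos')
      rw [h2]; exact lt_of_lt_of_le h3 h1
    intro h
    rw [h] at hμK
    simp at hμK
  refine ⟨μ, hμne, ?_, ?_, ?_, ?_, ?_⟩
  · exact fun K hK => hK.measure_lt_top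
  · exact fun E _ => Set.measure_eq_iInf_isOpen E μ
  · rintro E (hE | ⟨hEm, hEfin⟩)
    · exact hE.measure_eq_iSup_isCompact μ
    · exact hEm.measure_eq_iSup_isCompact_of_ne_top hEfin.ne
  · intro g φ hφc hφs
    calc ∫ x, φ x ∂μ = ∫ x, φ x ∂(Measure.map (T g) μ) := by rw [hmap g]
      _ = ∫ x, φ (T g x) ∂μ :=
        MeasureTheory.integral_map (hTcont g).aemeasurable hφc.aestronglyMeasurable
  · intro hσ _
    haveI := hσ
    refine ⟨?_, hmap⟩
    exact ⟨⟨⟨fun n => compactCovering X n, fun _ => Set.mem_univ _,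
      fun n => (isCompact_compactCovering X n).measure_lt_top,
      iUnion_compactCovering X⟩⟩⟩
end

section
/- In the setting of the product mean ergodic theorem — G_1,…,G_l σ-compact amenable groups, families {T_{g_i}}_{g_i∈G_i} of continuous linear operators of a common reflexive Banach space E satisfying T_{g_i}T_{h_i} = T_{h_i g_i}, weak Borel measurability, and a.e. uniform boundedness, with P_i the strong-operator limit of the averages (1/m_i(F_n^{(i)})) ∫_{F_n^{(i)}} T_{g_i} dg_i over Følner sequences {F_n^{(i)}} — if ‖I − P_1 ⋯ P_l‖ < 1 (operator norm, I the identity on E), then T_g = I for every g ∈ G_i and every 1 ≤ i ≤ l. -/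
open Filter Topology ENNReal
open scoped symmDiff Pointwise

open MeasureTheory NormedSpace

/-- Bound for the difference of two set integrals by the measure of the symmetric
difference, for an a.e. bounded measurable function. -/
lemma abs_setIntegral_sub_le_symmDiff {α : Type*} [MeasurableSpace α] (μ : Measure α)
    {s t : Set α} (hs : MeasurableSet s) (ht : MeasurableSet t)
    (hμs : μ s ≠ ⊤) (hμt : μ t ≠ ⊤)
    {φ : α → ℝ} (hφ : Measurable φ) {C : ℝ}
    (hb : ∀ᵐ a ∂μ, |φ a| ≤ C) :
    |∫ a in s, φ a ∂μ - ∫ a in t, φ a ∂μ| ≤ C * (μ (s ∆ t)).toReal := by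
  have hint : ∀ u : Set α, μ u ≠ ⊤ → IntegrableOn φ u μ := by
    intro u hu
    refine Integrable.mono'
      ((integrableOn_const hu : IntegrableOn (fun _ => C) u μ))
      hφ.aestronglyMeasurable.restrict ?_
    filter_upwards [ae_restrict_of_ae hb] with a ha using by simpa [Real.norm_eq_abs] using ha
  have hst : μ (s \ t) ≠ ⊤ := fun h => hμs (top_le_iff.1 (h ▸ measure_mono Set.diff_subset))
  have hts : μ (t \ s) ≠ ⊤ := fun h => hμt (top_le_iff.1 (h ▸ measure_mono Set.diff_subset))
  have hi : μ (s ∩ t) ≠ ⊤ := fun h => hμs (top_le_iff.1 (h ▸ measure_mono Set.inter_subset_left))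
  have hsplit : ∀ u v : Set α, MeasurableSet u → MeasurableSet v → μ u ≠ ⊤ → μ v ≠ ⊤ →
      ∫ a in u, φ a ∂μ = (∫ a in u \ v, φ a ∂μ) + ∫ a in u ∩ v, φ a ∂μ := by
    intro u v hu hv hμu hμv
    rw [← setIntegral_union ((Set.disjoint_left.2 fun a ha hb => ha.2 hb.2)) (hu.inter hv)
      (hint _ (fun h => hμu (top_le_iff.1 (h ▸ measure_mono Set.diff_subset))))
      (hint _ (fun h => hμu (top_le_iff.1 (h ▸ measure_mono Set.inter_subset_left)))),
      Set.diff_union_inter]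
  have h1 := hsplit s t hs ht hμs hμt
  have h2 := hsplit t s ht hs hμt hμs
  rw [Set.inter_comm t s] at h2
  have hdiff : (∫ a in s, φ a ∂μ) - ∫ a in t, φ a ∂μ
      = (∫ a in s \ t, φ a ∂μ) - ∫ a in t \ s, φ a ∂μ := by rw [h1, h2]; ring
  have hb1 : ∀ u : Set α, MeasurableSet u → μ u ≠ ⊤ →
      |∫ a in u, φ a ∂μ| ≤ C * (μ u).toReal := by
    intro u hu hμu
    have := norm_setIntegral_le_of_norm_le_const_ae' (f := φ) (μ := μ) hμu.lt_top
      (by filter_upwards [hb] with a ha _ using by simpa [Real.norm_eq_abs] using ha)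
    simpa [Real.norm_eq_abs, Measure.real] using this
  have hsd : (μ (s ∆ t)).toReal = (μ (s \ t)).toReal + (μ (t \ s)).toReal := by
    rw [Set.symmDiff_def, measure_union (Set.disjoint_left.2 fun a ha hb => ha.2 hb.1) (ht.diff hs),
      ENNReal.toReal_add hst hts]
  calc |∫ a in s, φ a ∂μ - ∫ a in t, φ a ∂μ|
      ≤ |∫ a in s \ t, φ a ∂μ| + |∫ a in t \ s, φ a ∂μ| := by
        rw [hdiff]; exact abs_sub _ _
    _ ≤ C * (μ (s \ t)).toReal + C * (μ (t \ s)).toReal := by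
        exact add_le_add (hb1 _ (hs.diff ht) hst) (hb1 _ (ht.diff hs) hts)
    _ = C * (μ (s ∆ t)).toReal := by rw [hsd]; ring

lemma foldr_surj_all_id {E : Type} [NormedAddCommGroup E] [NormedSpace ℝ E] :
    ∀ L : List (E →L[ℝ] E), (∀ p ∈ L, ∀ x, p (p x) = p x) →
    Function.Surjective ⇑(L.foldr (fun p q => p.comp q) (ContinuousLinearMap.id ℝ E)) →
    ∀ p ∈ L, p = ContinuousLinearMap.id ℝ E := by
  intro L
  induction L with
  | nil => intro _ _ p hp; simp at hp
  | cons p L ih =>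
    intro hidem hsurj q hq
    have hpid : p = ContinuousLinearMap.id ℝ E := by
      have hpsurj : Function.Surjective ⇑p := by
        intro x
        obtain ⟨z, hz⟩ := hsurj x
        exact ⟨_, hz⟩
      ext x
      obtain ⟨y, hy⟩ := hpsurj x
      have := hidem p (List.mem_cons_self) y
      simp only [ContinuousLinearMap.coe_id', id_eq]
      rw [← hy, this]
    have hsurj' : Function.Surjective
        ⇑(L.foldr (fun p q => p.comp q) (ContinuousLinearMap.id ℝ E)) := by
      intro x
      obtain ⟨z, hz⟩ := hsurj x
      refine ⟨z, ?_⟩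
      simpa [hpid] using hz
    rcases List.mem_cons.1 hq with h | h
    · exact h ▸ hpid
    · exact ih (fun r hr => hidem r (List.mem_cons_of_mem p hr)) hsurj' q h

/-- **A generalization of Cox's theorem** (Corollary 2.3 of the paper).  In the
setting of the product mean ergodic theorem — σ-compact amenable groups
`G_1, …, G_l`, families `{T_{g_i}}` of continuous linear operators of a common
reflexive Banach space `E` satisfying `T_{g_i}T_{h_i} = T_{h_i g_i}`, weak Borel
measurability and a.e. uniform boundedness, with `P_i` the strong-operator limits of
the Pettis averages over Følner sequences — if `‖I − P_1 ⋯ P_l‖ < 1` then `T_g = I`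
for every `g ∈ G_i` and every `i`. -/
theorem cox_theorem_amenable
    (l : ℕ) (hl : 2 ≤ l)
    (G : Fin l → Type) [∀ i, Group (G i)] [∀ i, TopologicalSpace (G i)]
    [∀ i, IsTopologicalGroup (G i)] [∀ i, LocallyCompactSpace (G i)] [∀ i, T2Space (G i)]
    [∀ i, SigmaCompactSpace (G i)] [∀ i, MeasurableSpace (G i)] [∀ i, BorelSpace (G i)]
    (m : ∀ i, Measure (G i)) [∀ i, (m i).IsHaarMeasure] [∀ i, SigmaFinite (m i)]
    (F : ∀ i, ℕ → Set (G i)) (hF : ∀ i, IsFolnerNet (m i) (F i))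
    {E : Type} [NormedAddCommGroup E] [NormedSpace ℝ E] [CompleteSpace E]
    (hrefl : Function.Surjective (NormedSpace.inclusionInDoubleDual ℝ E))
    (T : ∀ i, G i → E →L[ℝ] E)
    (hmul : ∀ (i : Fin l) (g h : G i) (x : E), T i g (T i h x) = T i (h * g) x)
    (hmeas : ∀ (i : Fin l) (x : E) (y : StrongDual ℝ E), Measurable fun g => y (T i g x))
    (hbdd : ∀ i : Fin l, ∃ β : ℝ, ∀ᵐ g ∂(m i), ‖T i g‖ ≤ β)
    -- the Pettis averages over the Følner sets of each factor
    (A : ∀ _ : Fin l, ℕ → E → E)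
    (hA : ∀ (i : Fin l) (n : ℕ) (x : E) (y : StrongDual ℝ E),
      y (A i n x) = (m i (F i n)).toReal⁻¹ * ∫ g in F i n, y (T i g x) ∂(m i))
    -- the mean ergodic limits P_i, as continuous linear operators
    (P : Fin l → E →L[ℝ] E)
    (hP : ∀ (i : Fin l) (x : E), Tendsto (fun n => A i n x) atTop (𝓝 (P i x)))
    -- the smallness hypothesis ‖I − P_1 ⋯ P_l‖ < 1
    (hsmall : ‖ContinuousLinearMap.id ℝ E -
        (List.ofFn P).foldr (fun p q => p.comp q) (ContinuousLinearMap.id ℝ E)‖ < 1) :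
    ∀ (i : Fin l) (g : G i), T i g = ContinuousLinearMap.id ℝ E := by
  -- basic measure facts
  have hcomp : ∀ i n, IsCompact (F i n) := fun i => (hF i).1
  have hposμ : ∀ i n, 0 < m i (F i n) := fun i => (hF i).2.1
  have hms : ∀ i n, MeasurableSet (F i n) := fun i n => (hcomp i n).isClosed.measurableSet
  have hfin : ∀ i n, m i (F i n) ≠ ⊤ := fun i n => (hcomp i n).measure_lt_top.ne
  have htR : ∀ i n, 0 < (m i (F i n)).toReal :=
    fun i n => ENNReal.toReal_pos (hposμ i n).ne' (hfin i n)
  -- Step 1: P i (T i g x) = P i x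
  have key : ∀ (i : Fin l) (g : G i) (x : E), P i (T i g x) = P i x := by
    intro i g x
    obtain ⟨β, hβ⟩ := hbdd i
    set β' : ℝ := max β 0 with hβ'def
    have hβ' : ∀ᵐ h ∂(m i), ‖T i h‖ ≤ β' := by
      filter_upwards [hβ] with h hh using hh.trans (le_max_left _ _)
    have hsub : P i (T i g x) - P i x = 0 := by
      apply NormedSpace.eq_zero_of_forall_dual_eq_zero ℝ
      intro y
      set φ : G i → ℝ := fun h => y (T i h x) with hφdef
      set C : ℝ := ‖y‖ * (β' * ‖x‖) with hCdef
      have hbφ : ∀ᵐ h ∂(m i), |φ h| ≤ C := by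
        filter_upwards [hβ'] with h hh
        calc |φ h| ≤ ‖y‖ * ‖T i h x‖ := y.le_opNorm _
          _ ≤ ‖y‖ * (‖T i h‖ * ‖x‖) :=
            mul_le_mul_of_nonneg_left ((T i h).le_opNorm x) (norm_nonneg y)
          _ ≤ C := by
            refine mul_le_mul_of_nonneg_left ?_ (norm_nonneg y)
            exact mul_le_mul_of_nonneg_right hh (norm_nonneg x)
      -- rewrite y (A i n (T i g x)) as an integral over g • F i n
      have himg : ∀ n, ∫ h in F i n, φ (g * h) ∂(m i) = ∫ h in g • F i n, φ h ∂(m i) := by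
        intro n
        have h1 := (measurePreserving_mul_left (m i) g).setIntegral_image_emb
          (MeasurableEquiv.mulLeft g).measurableEmbedding φ (F i n)
        have : g • F i n = (fun h => g * h) '' F i n := (Set.image_smul).symm
        rw [this, h1]
      have heq1 : ∀ n, y (A i n (T i g x))
          = (m i (F i n)).toReal⁻¹ * ∫ h in g • F i n, φ h ∂(m i) := by
        intro n
        rw [hA i n (T i g x) y, ← himg n]
        congr 1
        apply setIntegral_congr_fun (hms i n)
        intro h _
        simp only [hφdef]
        rw [hmul i h g x]
      have heq2 : ∀ n, y (A i n x) = (m i (F i n)).toReal⁻¹ * ∫ h in F i n, φ h ∂(m i) :=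
        fun n => hA i n x y
      -- the difference is controlled by the Følner ratio
      have hCnn : 0 ≤ C := by positivity
      have hbound : ∀ n, |y (A i n (T i g x)) - y (A i n x)|
          ≤ C * ((m i ((g • F i n) ∆ (F i n))).toReal / (m i (F i n)).toReal) := by
        intro n
        rw [heq1 n, heq2 n, ← mul_sub]
        rw [abs_mul, abs_of_nonneg (inv_nonneg.2 (htR i n).le)]
        have hb := abs_setIntegral_sub_le_symmDiff (m i)
          ((hcomp i n).smul g).isClosed.measurableSet (hms i n)
          (((hcomp i n).smul g).measure_lt_top).ne (hfin i n)
          (hmeas i x y) hbφ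
        calc (m i (F i n)).toReal⁻¹ * |(∫ h in g • F i n, φ h ∂(m i)) - ∫ h in F i n, φ h ∂(m i)|
            ≤ (m i (F i n)).toReal⁻¹ * (C * (m i ((g • F i n) ∆ (F i n))).toReal) :=
              mul_le_mul_of_nonneg_left hb (inv_nonneg.2 (htR i n).le)
          _ = C * ((m i ((g • F i n) ∆ (F i n))).toReal / (m i (F i n)).toReal) := by
              rw [div_eq_mul_inv]; ring
      have hzero : Tendsto (fun n => y (A i n (T i g x)) - y (A i n x)) atTop (𝓝 0) := by
        have hfol := (hF i).2.2 g
        have hC0 : Tendsto (fun n =>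
            C * ((m i ((g • F i n) ∆ (F i n))).toReal / (m i (F i n)).toReal)) atTop (𝓝 0) := by
          simpa using hfol.const_mul C
        refine squeeze_zero_norm (fun n => ?_) hC0
        simpa [Real.norm_eq_abs] using hbound n
      have hlim : Tendsto (fun n => y (A i n (T i g x)) - y (A i n x)) atTop
          (𝓝 (y (P i (T i g x)) - y (P i x))) := by
        exact ((y.continuous.tendsto _).comp (hP i (T i g x))).sub
          ((y.continuous.tendsto _).comp (hP i x))
      have := tendsto_nhds_unique hlim hzero
      simpa [map_sub] using this
    exact sub_eq_zero.1 hsub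
  -- Step 2: each P i is idempotent
  have hidem : ∀ (i : Fin l) (x : E), P i (P i x) = P i x := by
    intro i x
    have hPA : ∀ n, P i (A i n x) = P i x := by
      intro n
      have hsub : P i (A i n x) - P i x = 0 := by
        apply NormedSpace.eq_zero_of_forall_dual_eq_zero ℝ
        intro y
        have h1 : y (P i (A i n x)) = (y.comp (P i)) (A i n x) := rfl
        rw [map_sub, h1, hA i n x (y.comp (P i))]
        have h2 : ∀ h ∈ F i n, (y.comp (P i)) (T i h x) = y (P i x) := by
          intro h _
          simp only [ContinuousLinearMap.coe_comp', Function.comp_apply]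
          rw [key i h x]
        rw [setIntegral_congr_fun (hms i n) h2, setIntegral_const, smul_eq_mul, measureReal_def,
          ← mul_assoc, inv_mul_cancel₀ (htR i n).ne', one_mul, sub_self]
      exact sub_eq_zero.1 hsub
    have hlim : Tendsto (fun n => P i (A i n x)) atTop (𝓝 (P i (P i x))) :=
      ((P i).continuous.tendsto _).comp (hP i x)
    have hconst : Tendsto (fun n => P i (A i n x)) atTop (𝓝 (P i x)) := by
      simpa [hPA] using (tendsto_const_nhds : Tendsto (fun _ : ℕ => P i x) atTop _)
    exact tendsto_nhds_unique hlim hconst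
  -- Step 3: the product is surjective, hence each P i = id
  set Q : E →L[ℝ] E := (List.ofFn P).foldr (fun p q => p.comp q) (ContinuousLinearMap.id ℝ E)
    with hQdef
  have hQsurj : Function.Surjective ⇑Q := by
    have h1 : ‖(1 : E →L[ℝ] E) - Q‖ < 1 := by
      simpa [ContinuousLinearMap.one_def] using hsmall
    set u := Units.oneSub ((1 : E →L[ℝ] E) - Q) h1 with hudef
    have huval : (u : E →L[ℝ] E) = Q := by
      simp [hudef, Units.oneSub]
    intro x
    refine ⟨(↑u⁻¹ : E →L[ℝ] E) x, ?_⟩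
    have := congrArg (fun f : E →L[ℝ] E => f x) u.mul_inv
    simpa [huval, ContinuousLinearMap.mul_apply] using this
  have hPid : ∀ i, P i = ContinuousLinearMap.id ℝ E := by
    intro i
    refine foldr_surj_all_id (List.ofFn P) ?_ hQsurj (P i) ?_
    · intro p hp x
      obtain ⟨j, rfl⟩ := (List.mem_ofFn (f := P) (a := p)).1 hp
      exact hidem j x
    · exact (List.mem_ofFn (f := P) (a := P i)).2 ⟨i, rfl⟩
  -- conclude
  intro i g
  ext x
  have h1 := key i g x
  rw [hPid i] at h1
  simpa using h1
end
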